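/- arXiv:2304.00864 — 7 statements merged into one kernel-verified Lean document; each statement's English description precedes it below -/
import Mathlib

section
/- Let G be a finite simple connected graph whose girth is at least 7. Then μ_d(G) = 0 if and only if the minimum degree of G is at least 2. -/
open SimpleGraph

section AuxGirth

section Aux
variable {V : Type*} {G : SimpleGraph V}

private lemma girth7_big {a : V} (hg : 7 ≤ G.egirth) (w : G.Walk a a) (hw : w.IsCycle)
    (hlen : w.length ≤ 6) : False := by
  have h := SimpleGraph.le_egirth.mp hg a w hw
  have : (7 : ℕ∞) ≤ (6 : ℕ∞) := le_trans h (by exact_mod_cast Nat.cast_le.mpr hlen)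
  norm_num at this

private lemma girth7_no3 (hg : 7 ≤ G.egirth) {a b c : V}
    (h1 : G.Adj a b) (h2 : G.Adj b c) (h3 : G.Adj c a) : False := by
  refine girth7_big hg (.cons h1 (.cons h2 (.cons h3 .nil))) ?_ (by simp)
  simp [Walk.isCycle_def, Walk.isTrail_def, List.nodup_cons, Sym2.eq_iff]
  aesop

private lemma girth7_no4 (hg : 7 ≤ G.egirth) {a b c d : V}
    (h1 : G.Adj a b) (h2 : G.Adj b c) (h3 : G.Adj c d) (h4 : G.Adj d a)
    (hac : a ≠ c) (hbd : b ≠ d) : False := by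
  refine girth7_big hg (.cons h1 (.cons h2 (.cons h3 (.cons h4 .nil)))) ?_ (by simp)
  simp [Walk.isCycle_def, Walk.isTrail_def, List.nodup_cons, Sym2.eq_iff]
  aesop

private lemma girth7_no5 (hg : 7 ≤ G.egirth) {a b c d e : V}
    (h1 : G.Adj a b) (h2 : G.Adj b c) (h3 : G.Adj c d) (h4 : G.Adj d e) (h5 : G.Adj e a)
    (hac : a ≠ c) (had : a ≠ d) (hbd : b ≠ d) (hbe : b ≠ e) (hce : c ≠ e) : False := by
  refine girth7_big hg (.cons h1 (.cons h2 (.cons h3 (.cons h4 (.cons h5 .nil))))) ?_ (by simp)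
  simp [Walk.isCycle_def, Walk.isTrail_def, List.nodup_cons, Sym2.eq_iff]
  aesop

private lemma girth7_no6 (hg : 7 ≤ G.egirth) {a b c d e f : V}
    (h1 : G.Adj a b) (h2 : G.Adj b c) (h3 : G.Adj c d) (h4 : G.Adj d e) (h5 : G.Adj e f)
    (h6 : G.Adj f a)
    (hac : a ≠ c) (had : a ≠ d) (hae : a ≠ e) (hbd : b ≠ d) (hbe : b ≠ e) (hbf : b ≠ f)
    (hce : c ≠ e) (hcf : c ≠ f) (hdf : d ≠ f) : False := by
  refine girth7_big hg
    (.cons h1 (.cons h2 (.cons h3 (.cons h4 (.cons h5 (.cons h6 .nil)))))) ?_ (by simp)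
  simp [Walk.isCycle_def, Walk.isTrail_def, List.nodup_cons, Sym2.eq_iff]
  aesop

private lemma walk2_mid {a b : V} (p : G.Walk a b) (h : p.length = 2) :
    ∃ m, G.Adj a m ∧ G.Adj m b ∧ m ∈ p.support := by
  cases p with
  | nil => simp at h
  | cons h1 q =>
    cases q with
    | nil => simp at h
    | cons h2 r =>
      cases r with
      | nil => exact ⟨_, h1, h2, by simp⟩
      | cons h3 s => simp at h

private lemma walk3_mid {a b : V} (p : G.Walk a b) (hp : p.IsPath) (h : p.length = 3) :
    ∃ m n, G.Adj a m ∧ G.Adj m n ∧ G.Adj n b ∧ m ≠ b ∧ n ≠ a ∧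
      m ∈ p.support ∧ n ∈ p.support := by
  cases p with
  | nil => simp at h
  | cons h1 q =>
    cases q with
    | nil => simp at h
    | cons h2 r =>
      cases r with
      | nil => simp at h
      | cons h3 s =>
        cases s with
        | nil =>
          rw [Walk.isPath_def] at hp
          simp only [Walk.support_cons, Walk.support_nil, List.nodup_cons, List.mem_cons,
            List.mem_singleton, List.not_mem_nil] at hp
          refine ⟨_, _, h1, h2, h3, ?_, ?_, by simp, by simp⟩ <;> tauto
        | cons h4 t => simp at h

end Aux


variable {V : Type*} {G : SimpleGraph V}

private lemma two_le_degree_of_interior [Fintype V] [DecidableRel G.Adj]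
    {u w v : V} (p : G.Walk u w) (hp : p.IsPath) (hv : v ∈ p.support)
    (hvu : v ≠ u) (hvw : v ≠ w) : 2 ≤ G.degree v := by
  classical
  set q := p.takeUntil v hv with hq
  set r := p.dropUntil v hv with hr
  have hspec : q.append r = p := p.take_spec hv
  have hqP : q.IsPath := hp.takeUntil hv
  have hrP : r.IsPath := hp.dropUntil hv
  have hqn : ¬ q.Nil := Walk.not_nil_of_ne (fun h => hvu h.symm)
  have hrn : ¬ r.Nil := Walk.not_nil_of_ne hvw
  set n1 := q.reverse.getVert 1 with hn1
  set n2 := r.getVert 1 with hn2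
  have ha1 : G.Adj v n1 := Walk.adj_snd (Walk.not_nil_of_ne hvu)
  have ha2 : G.Adj v n2 := Walk.adj_snd hrn
  have hm1 : n1 ∈ q.support := by
    have : n1 ∈ q.reverse.support :=
      Walk.mem_support_iff_exists_getVert.mpr ⟨1, rfl, by
        rw [Walk.length_reverse]
        have := Walk.not_nil_iff_lt_length.mp hqn
        omega⟩
    simpa using this
  have hm2 : n2 ∈ r.support.tail := by
    have hmem : n2 ∈ r.support :=
      Walk.mem_support_iff_exists_getVert.mpr ⟨1, rfl, by
        have := Walk.not_nil_iff_lt_length.mp hrn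
        omega⟩
    rw [r.support_eq_cons] at hmem
    rcases List.mem_cons.mp hmem with h | h
    · exact absurd h ha2.ne'
    · exact h
  have hne : n1 ≠ n2 := by
    intro hEq
    have hnodup : (q.append r).support.Nodup := by
      rw [hspec]; exact hp.support_nodup
    rw [Walk.support_append] at hnodup
    have hdisj := List.disjoint_of_nodup_append hnodup
    exact hdisj hm1 (hEq ▸ hm2)
  have hsub : ({n1, n2} : Finset V) ⊆ G.neighborFinset v := by
    intro z hz
    rcases Finset.mem_insert.mp hz with h | h
    · subst h; simpa using ha1
    · rw [Finset.mem_singleton] at h; subst h; simpa using ha2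
  calc 2 = ({n1, n2} : Finset V).card := (Finset.card_pair hne).symm
    _ ≤ (G.neighborFinset v).card := Finset.card_le_card hsub
    _ = G.degree v := rfl

end AuxGirth

/-- Vertices `u` and `v` are `X`-visible in `G`: there is a shortest `u,v`-path `P`
such that `V(P) ∩ X ⊆ {u, v}`. -/
def XVisible {V : Type*} (G : SimpleGraph V) (X : Set V) (u v : V) : Prop :=
  ∃ p : G.Walk u v, p.IsPath ∧ p.length = G.dist u v ∧
    ∀ w ∈ p.support, w ∈ X → w = u ∨ w = v

/-- `X` is a mutual-visibility set of `G`. -/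
def IsMVSet {V : Type*} (G : SimpleGraph V) (X : Set V) : Prop :=
  ∀ u ∈ X, ∀ v ∈ X, XVisible G X u v

/-- `X` is a total mutual-visibility set of `G`. -/
def IsTotalMVSet {V : Type*} (G : SimpleGraph V) (X : Set V) : Prop :=
  ∀ u v : V, XVisible G X u v

/-- `X` is an outer mutual-visibility set of `G`. -/
def IsOuterMVSet {V : Type*} (G : SimpleGraph V) (X : Set V) : Prop :=
  (∀ u ∈ X, ∀ v ∈ X, XVisible G X u v) ∧ ∀ u ∈ X, ∀ v ∉ X, XVisible G X u v

/-- `X` is a dual mutual-visibility set of `G`. -/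
def IsDualMVSet {V : Type*} (G : SimpleGraph V) (X : Set V) : Prop :=
  (∀ u ∈ X, ∀ v ∈ X, XVisible G X u v) ∧ ∀ u ∉ X, ∀ v ∉ X, XVisible G X u v

/-- The mutual-visibility number `μ(G)`. -/
noncomputable def mu {V : Type*} (G : SimpleGraph V) : ℕ :=
  sSup {k | ∃ X : Set V, IsMVSet G X ∧ X.ncard = k}

/-- The total mutual-visibility number `μₜ(G)`. -/
noncomputable def muTotal {V : Type*} (G : SimpleGraph V) : ℕ :=
  sSup {k | ∃ X : Set V, IsTotalMVSet G X ∧ X.ncard = k}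

/-- The outer mutual-visibility number `μₒ(G)`. -/
noncomputable def muOuter {V : Type*} (G : SimpleGraph V) : ℕ :=
  sSup {k | ∃ X : Set V, IsOuterMVSet G X ∧ X.ncard = k}

/-- The dual mutual-visibility number `μ_d(G)`. -/
noncomputable def muDual {V : Type*} (G : SimpleGraph V) : ℕ :=
  sSup {k | ∃ X : Set V, IsDualMVSet G X ∧ X.ncard = k}


theorem muDual_eq_zero_iff_minDegree_ge_two_of_girth_ge_seven {V : Type*} [Fintype V]
    (G : SimpleGraph V) [DecidableRel G.Adj] (hG : G.Connected)
    (hgirth : 7 ≤ G.egirth) :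
    muDual G = 0 ↔ 2 ≤ G.minDegree := by
  classical
  haveI : Nonempty V := hG.nonempty
  set S := {k | ∃ X : Set V, IsDualMVSet G X ∧ X.ncard = k} with hS
  have hmu : muDual G = sSup S := rfl
  have hBdd : BddAbove S := by
    refine ⟨Fintype.card V, ?_⟩
    rintro k ⟨X, -, rfl⟩
    have := Set.ncard_le_ncard (Set.subset_univ X) Set.finite_univ
    rw [Set.ncard_univ] at this
    simpa [Nat.card_eq_fintype_card] using this
  constructor
  · -- muDual = 0 → 2 ≤ minDegree
    intro h0
    by_contra hlt
    push_neg at hlt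
    obtain ⟨v, hv⟩ := G.exists_minimal_degree_vertex
    have hdv : G.degree v ≤ 1 := by omega
    have hdual : IsDualMVSet G {v} := by
      constructor
      · intro u hu u' hu'
        rw [Set.mem_singleton_iff] at hu hu'
        subst hu; subst hu'
        exact ⟨Walk.nil, Walk.IsPath.nil, by simp [SimpleGraph.dist_self], by simp⟩
      · intro a ha b hb
        obtain ⟨p, hp, hl⟩ := hG.exists_path_of_dist a b
        refine ⟨p, hp, hl, ?_⟩
        intro w hw hwX
        rw [Set.mem_singleton_iff] at hwX
        subst hwX
        by_contra hcon
        push_neg at hcon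
        have := two_le_degree_of_interior p hp hw (fun h => ha (h ▸ rfl)) (fun h => hb (h ▸ rfl))
        omega
    have h1 : 1 ∈ S := ⟨{v}, hdual, Set.ncard_singleton v⟩
    have := le_csSup hBdd h1
    omega
  · -- 2 ≤ minDegree → muDual = 0
    intro hdeg
    have hdeg2 : ∀ v : V, 2 ≤ G.degree v := fun v => le_trans hdeg (G.minDegree_le_degree v)
    have hnb : ∀ v t : V, ∃ a, G.Adj v a ∧ a ≠ t := by
      intro v t
      have h2 : 1 < (G.neighborFinset v).card := lt_of_lt_of_le one_lt_two (hdeg2 v)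
      obtain ⟨a, haf, hat⟩ := Finset.exists_mem_ne h2 t
      exact ⟨a, (G.mem_neighborFinset v a).mp haf, hat⟩
    have hkey : ∀ X : Set V, IsDualMVSet G X → X = ∅ := by
      intro X hX
      by_contra hXne
      obtain ⟨x, hx⟩ := Set.nonempty_iff_ne_empty.mpr hXne
      have U2 : ∀ c ∈ X, ∀ y z : V, G.Adj c y → G.Adj c z → y ≠ z → ¬ XVisible G X y z := by
        intro c hc y z hcy hcz hyz hvis
        obtain ⟨p, hp, hl, hcond⟩ := hvis
        have hnadj : ¬ G.Adj y z := fun h => girth7_no3 hgirth h hcz.symm hcy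
        have hd2 : G.dist y z = 2 := by
          have hle : G.dist y z ≤ 2 := by
            have := G.dist_le (Walk.cons hcy.symm (Walk.cons hcz Walk.nil))
            simpa using this
          have h0 : G.dist y z ≠ 0 := fun h => hyz (hG.dist_eq_zero_iff.mp h)
          have h1 : G.dist y z ≠ 1 := fun h => hnadj (dist_eq_one_iff_adj.mp h)
          omega
        rw [hd2] at hl
        obtain ⟨m, hym, hmz, hms⟩ := walk2_mid p hl
        have hmc : m = c := by
          by_contra h
          exact girth7_no4 hgirth hym hmz hcz.symm hcy hyz h
        rw [hmc] at hms
        rcases hcond c hms hc with h | h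
        · exact hcy.ne h
        · exact hcz.ne h
      by_cases hNy : ∃ y, G.Adj x y ∧ y ∈ X
      · obtain ⟨y, hxy, hyX⟩ := hNy
        obtain ⟨a, hxa, hay⟩ := hnb x y
        have haX : a ∉ X := fun haX => U2 x hx a y hxa hxy hay (hX.1 a haX y hyX)
        obtain ⟨b, hyb, hbx⟩ := hnb y x
        have hbX : b ∉ X := fun hbX => U2 y hyX b x hyb hxy.symm hbx (hX.1 b hbX x hx)
        have hnay : ¬ G.Adj a y := fun h => girth7_no3 hgirth hxa h hxy.symm
        have hnbx : ¬ G.Adj b x := fun h => girth7_no3 hgirth hyb h hxy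
        have hab : a ≠ b := fun h => hnay (h ▸ hyb.symm)
        have hnab : ¬ G.Adj a b :=
          fun h => girth7_no4 hgirth h hyb.symm hxy.symm hxa hay hbx
        obtain ⟨p, hp, hl, hcond⟩ := hX.2 a haX b hbX
        have hdle : G.dist a b ≤ 3 := by
          have := G.dist_le (Walk.cons hxa.symm (Walk.cons hxy (Walk.cons hyb Walk.nil)))
          simpa using this
        have hl3 : p.length ≤ 3 := by rw [hl]; exact hdle
        have hl0 : p.length ≠ 0 := fun h => hab (Walk.eq_of_length_eq_zero h)
        have hl1 : p.length ≠ 1 := fun h => hnab (dist_eq_one_iff_adj.mp (hl ▸ h))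
        have : p.length = 2 ∨ p.length = 3 := by omega
        rcases this with h2 | h3
        · obtain ⟨m, ham, hmb, -⟩ := walk2_mid p h2
          have hmy : m ≠ y := fun h => hnay (h ▸ ham)
          have hmx : m ≠ x := fun h => hnbx ((h ▸ hmb).symm)
          exact girth7_no5 hgirth ham hmb hyb.symm hxy.symm hxa hab hay hmy hmx hbx
        · obtain ⟨m, n, ham, hmn, hnb', hmb, hna, hms, hns⟩ := walk3_mid p hp h3
          have hmX : m ∉ X := by
            intro h
            rcases hcond m hms h with h' | h'
            · exact ham.ne h'.symm
            · exact hmb h'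
          have hnX : n ∉ X := by
            intro h
            rcases hcond n hns h with h' | h'
            · exact hna h'
            · exact hnb'.ne h'
          have hmy : m ≠ y := fun h => hmX (by rw [h]; exact hyX)
          have hmx : m ≠ x := fun h => hmX (by rw [h]; exact hx)
          have hny : n ≠ y := fun h => hnX (by rw [h]; exact hyX)
          have hnx : n ≠ x := fun h => hnX (by rw [h]; exact hx)
          exact girth7_no6 hgirth ham hmn hnb' hyb.symm hxy.symm hxa
            (Ne.symm hna) hab hay hmb hmy hmx hny hnx hbx
      · push_neg at hNy
        obtain ⟨y, hxy, -⟩ := hnb x x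
        obtain ⟨z, hxz, hzy⟩ := hnb x y
        exact U2 x hx y z hxy hxz (Ne.symm hzy) (hX.2 y (hNy y hxy) z (hNy z hxz))
    have hS0 : S = {0} := by
      apply subset_antisymm
      · rintro k ⟨X, hXd, rfl⟩
        simp [hkey X hXd]
      · rintro k hk
        rw [Set.mem_singleton_iff] at hk
        subst hk
        refine ⟨∅, ⟨fun u hu => absurd hu (Set.notMem_empty u), fun a _ b _ => ?_⟩, by simp⟩
        obtain ⟨p, hp, hl⟩ := hG.exists_path_of_dist a b
        exact ⟨p, hp, hl, fun w _ hw => absurd hw (Set.notMem_empty w)⟩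
    rw [hmu, hS0]
    exact csSup_singleton 0
end

section
/- For the cycle graph C_n on n vertices, the dual mutual-visibility number satisfies: μ_d(C_n) = 3 if n ∈ {3,4}; μ_d(C_n) = 2 if n ∈ {5,6}; and μ_d(C_n) = 0 if n ≥ 7. -/
open SimpleGraph

section CycleHelpers
open Fin.NatCast Fin.CommRing
section helpers
variable {N : ℕ} [NeZero N]

lemma fcast_eq_iff {a b : ℕ} (ha : a < N) (hb : b < N) : ((a : Fin N) = b) ↔ a = b := by
  rw [Fin.ext_iff, Fin.val_cast_of_lt ha, Fin.val_cast_of_lt hb]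

lemma fin_shift_ne' (x : Fin N) (a b : ℕ) (ha : a < N) (hb : b < N) (hab : a ≠ b)
    {A B : Fin N} (hA : x + (a : Fin N) = A) (hB : x + (b : Fin N) = B) : A ≠ B := by
  rw [← hA, ← hB, Ne, add_right_inj, fcast_eq_iff ha hb]; exact hab

lemma fs0 (x : Fin N) : x + ((0 : ℕ) : Fin N) = x := by norm_num
lemma fs1 (x : Fin N) : x + ((1 : ℕ) : Fin N) = x + 1 := by norm_num
lemma fs2 (x : Fin N) : x + ((2 : ℕ) : Fin N) = x + 2 := by norm_num
lemma fs3 (x : Fin N) : x + ((3 : ℕ) : Fin N) = x + 3 := by norm_num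
lemma fm (x : Fin N) (k : ℕ) (hk : k ≤ N) : x + ((N - k : ℕ) : Fin N) = x - k := by
  push_cast [Nat.cast_sub hk]; simp; ring

end helpers

section cyc
variable {m : ℕ}

lemma adj_gen (u v : Fin (m+2)) (h : v - u = 1) : (cycleGraph (m+2)).Adj u v := cycleGraph_adj.mpr (Or.inr h)

lemma adj_cases {u w : Fin (m+2)} (h : (cycleGraph (m+2)).Adj u w) : w = u + 1 ∨ w = u - 1 := by
  rw [cycleGraph_adj] at h
  rcases h with h | h
  · right; linear_combination -h
  · left; linear_combination h

lemma walk_destruct {u v : Fin (m+2)} (p : (cycleGraph (m+2)).Walk u v) :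
    (u = v ∧ p.length = 0) ∨
    ∃ w, ∃ _ : (cycleGraph (m+2)).Adj u w, ∃ q : (cycleGraph (m+2)).Walk w v, p.length = q.length + 1 ∧ p.support = u :: q.support := by
  cases p with
  | nil => exact .inl ⟨rfl, rfl⟩
  | cons h q => exact .inr ⟨_, h, q, rfl, rfl⟩

lemma conn : (cycleGraph (m+2)).Connected := cycleGraph_connected (n := m+1)

/-- second-vertex blocking: if both neighbours of `u` are in `X` and differ from `v`,
then `u` is not `X`-visible from `v`. -/
lemma notVisSecond {X : Set (Fin (m+2))} {u v : Fin (m+2)} (hne : u ≠ v)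
    (h1 : u + 1 ∈ X) (h2 : u - 1 ∈ X) (h1v : u + 1 ≠ v) (h2v : u - 1 ≠ v) :
    ¬ XVisible (cycleGraph (m+2)) X u v := by
  rintro ⟨p, hp, hlen, hsup⟩
  rcases walk_destruct p with ⟨h, -⟩ | ⟨w, hadj, q, hq, hsupp⟩
  · exact hne h
  have hwmem : w ∈ p.support := by rw [hsupp]; exact List.mem_cons_of_mem _ q.start_mem_support
  rcases adj_cases hadj with rfl | rfl
  · rcases hsup _ hwmem h1 with h | h
    · exact hadj.ne' h
    · exact h1v h
  · rcases hsup _ hwmem h2 with h | h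
    · exact hadj.ne' h
    · exact h2v h

lemma notVis2 (h5 : 5 ≤ m + 2) {X : Set (Fin (m+2))} {u : Fin (m+2)} (hx : u + 1 ∈ X) :
    ¬ XVisible (cycleGraph (m+2)) X u (u + 2) := by
  rintro ⟨p, hp, hlen, hsup⟩
  have hne02 : u ≠ u + 2 := fin_shift_ne' u 0 2 (by omega) (by omega) (by omega) (fs0 u) (fs2 u)
  have hlen2 : p.length ≤ 2 := by
    rw [hlen]
    exact dist_le (Walk.cons (adj_gen u (u+1) (by ring)) (Walk.cons (adj_gen (u+1) (u+2) (by ring)) Walk.nil))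
  rcases walk_destruct p with ⟨h, -⟩ | ⟨w1, ha1, q1, hl1, hs1⟩
  · exact hne02 h
  rcases adj_cases ha1 with rfl | rfl
  · have hwmem : u + 1 ∈ p.support := by rw [hs1]; exact List.mem_cons_of_mem _ q1.start_mem_support
    rcases hsup _ hwmem hx with h | h
    · exact ha1.ne' h
    · exact fin_shift_ne' u 1 2 (by omega) (by omega) (by omega) (fs1 u) (fs2 u) h
  · rcases walk_destruct q1 with ⟨h, -⟩ | ⟨w2, ha2, q2, hl2, hs2⟩
    · exact fin_shift_ne' u (m+2-1) 2 (by omega) (by omega) (by omega) (fm u 1 (by omega)) (fs2 u) h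
    rcases adj_cases ha2 with rfl | rfl
    · rcases walk_destruct q2 with ⟨h, -⟩ | ⟨_, _, _, hl3, -⟩
      · exact fin_shift_ne' u 0 2 (by omega) (by omega) (by omega) (by rw [fs0]; ring) (fs2 u) h
      · omega
    · rcases walk_destruct q2 with ⟨h, -⟩ | ⟨_, _, _, hl3, -⟩
      · exact fin_shift_ne' u (m+2-2) 2 (by omega) (by omega) (by omega)
          (by rw [fm u 2 (by omega)]; ring) (fs2 u) h
      · omega

lemma notVis3 (h7 : 7 ≤ m + 2) {X : Set (Fin (m+2))} {u : Fin (m+2)}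
    (hx1 : u + 1 ∈ X) (hx2 : u + 2 ∈ X) :
    ¬ XVisible (cycleGraph (m+2)) X u (u + 3) := by
  rintro ⟨p, hp, hlen, hsup⟩
  have hne03 : u ≠ u + 3 := fin_shift_ne' u 0 3 (by omega) (by omega) (by omega) (fs0 u) (fs3 u)
  have hlen3 : p.length ≤ 3 := by
    rw [hlen]
    exact dist_le (Walk.cons (adj_gen u (u+1) (by ring)) (Walk.cons (adj_gen (u+1) (u+2) (by ring))
      (Walk.cons (adj_gen (u+2) (u+3) (by ring)) Walk.nil)))
  rcases walk_destruct p with ⟨h, -⟩ | ⟨w1, ha1, q1, hl1, hs1⟩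
  · exact hne03 h
  rcases adj_cases ha1 with rfl | rfl
  · have hwmem : u + 1 ∈ p.support := by rw [hs1]; exact List.mem_cons_of_mem _ q1.start_mem_support
    rcases hsup _ hwmem hx1 with h | h
    · exact ha1.ne' h
    · exact fin_shift_ne' u 1 3 (by omega) (by omega) (by omega) (fs1 u) (fs3 u) h
  rcases walk_destruct q1 with ⟨h, -⟩ | ⟨w2, ha2, q2, hl2, hs2⟩
  · exact fin_shift_ne' u (m+2-1) 3 (by omega) (by omega) (by omega) (fm u 1 (by omega)) (fs3 u) h
  rcases adj_cases ha2 with rfl | rfl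
  · rcases walk_destruct q2 with ⟨h, -⟩ | ⟨w3, ha3, q3, hl3, hs3⟩
    · exact fin_shift_ne' u 0 3 (by omega) (by omega) (by omega) (by rw [fs0]; ring) (fs3 u) h
    rcases adj_cases ha3 with rfl | rfl
    · have e : u - 1 + 1 + 1 = u + 1 := by ring
      have hwmem : u - 1 + 1 + 1 ∈ p.support := by
        rw [hs1, hs2, hs3]
        exact List.mem_cons_of_mem _ (List.mem_cons_of_mem _
          (List.mem_cons_of_mem _ q3.start_mem_support))
      rcases hsup _ hwmem (e.symm ▸ hx1) with h | h
      · exact fin_shift_ne' u 1 0 (by omega) (by omega) (by omega) (by rw [fs1]; ring) (fs0 u) h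
      · exact fin_shift_ne' u 1 3 (by omega) (by omega) (by omega) (by rw [fs1]; ring) (fs3 u) h
    · rcases walk_destruct q3 with ⟨h, -⟩ | ⟨_, _, _, hl4, -⟩
      · exact fin_shift_ne' u (m+2-1) 3 (by omega) (by omega) (by omega)
          (by rw [fm u 1 (by omega)]; ring) (fs3 u) h
      · omega
  · rcases walk_destruct q2 with ⟨h, -⟩ | ⟨w3, ha3, q3, hl3, hs3⟩
    · exact fin_shift_ne' u (m+2-2) 3 (by omega) (by omega) (by omega)
        (by rw [fm u 2 (by omega)]; ring) (fs3 u) h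
    rcases adj_cases ha3 with rfl | rfl
    · rcases walk_destruct q3 with ⟨h, -⟩ | ⟨_, _, _, hl4, -⟩
      · exact fin_shift_ne' u (m+2-1) 3 (by omega) (by omega) (by omega)
          (by rw [fm u 1 (by omega)]; ring) (fs3 u) h
      · omega
    · rcases walk_destruct q3 with ⟨h, -⟩ | ⟨_, _, _, hl4, -⟩
      · exact fin_shift_ne' u (m+2-3) 3 (by omega) (by omega) (by omega)
          (by rw [fm u 3 (by omega)]; ring) (fs3 u) h
      · omega

lemma visSelf {V : Type*} (G : SimpleGraph V) (X : Set V) (u : V) : XVisible G X u u :=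
  ⟨Walk.nil, Walk.IsPath.nil, by simp [SimpleGraph.dist_self], by simp⟩

lemma visAdj {V : Type*} {G : SimpleGraph V} (X : Set V) {u v : V} (h : G.Adj u v) :
    XVisible G X u v := by
  refine ⟨Walk.cons h Walk.nil, ?_, ?_, ?_⟩
  · simp [Walk.isPath_def, h.ne]
  · simp [dist_eq_one_iff_adj.mpr h]
  · intro w hw _
    simpa using hw

lemma visSymm {V : Type*} {G : SimpleGraph V} {X : Set V} {u v : V} (h : XVisible G X u v) :
    XVisible G X v u := by
  obtain ⟨p, hp, hlen, hsup⟩ := h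
  refine ⟨p.reverse, hp.reverse, ?_, ?_⟩
  · rw [Walk.length_reverse, hlen, dist_comm]
  · intro w hw hwX
    rcases hsup w (by simpa using hw) hwX with h | h
    · exact Or.inr h
    · exact Or.inl h

lemma vis2 (h4 : 4 ≤ m + 2) {X : Set (Fin (m+2))} {u : Fin (m+2)} (hmid : u + 1 ∉ X) :
    XVisible (cycleGraph (m+2)) X u (u + 2) := by
  have hne01 : u ≠ u + 1 := fin_shift_ne' u 0 1 (by omega) (by omega) (by omega) (fs0 u) (fs1 u)
  have hne02 : u ≠ u + 2 := fin_shift_ne' u 0 2 (by omega) (by omega) (by omega) (fs0 u) (fs2 u)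
  have hne12 : u + 1 ≠ u + 2 := fin_shift_ne' u 1 2 (by omega) (by omega) (by omega) (fs1 u) (fs2 u)
  refine ⟨Walk.cons (adj_gen u (u+1) (by ring)) (Walk.cons (adj_gen (u+1) (u+2) (by ring)) Walk.nil),
    ?_, ?_, ?_⟩
  · simp [Walk.isPath_def, List.nodup_cons, hne01, hne02, hne12]
  · have hd2 : (cycleGraph (m+2)).dist u (u+2) = 2 := by
      have hle : (cycleGraph (m+2)).dist u (u+2) ≤ 2 := by
        have := dist_le (Walk.cons (adj_gen u (u+1) (by ring))
          (Walk.cons (adj_gen (u+1) (u+2) (by ring)) Walk.nil))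
        simp only [Walk.length_cons, Walk.length_nil] at this
        omega
      have h0 : (cycleGraph (m+2)).dist u (u+2) ≠ 0 :=
        fun h => hne02 ((conn.dist_eq_zero_iff).mp h)
      have h1 : (cycleGraph (m+2)).dist u (u+2) ≠ 1 := by
        intro h1
        have h := dist_eq_one_iff_adj.mp h1
        rcases adj_cases h with h | h
        · exact fin_shift_ne' u 2 1 (by omega) (by omega) (by omega) (fs2 u) (fs1 u) h
        · exact fin_shift_ne' u 2 (m+2-1) (by omega) (by omega) (by omega) (fs2 u)
            (fm u 1 (by omega)) h
      omega
    simpa using hd2.symm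
  · intro w hw hwX
    simp only [Walk.support_cons, Walk.support_nil, List.mem_cons, List.mem_singleton] at hw
    rcases hw with rfl | rfl | rfl | h
    · exact Or.inl rfl
    · exact absurd hwX hmid
    · exact Or.inr rfl
    · simp at h

lemma vis3 (h6 : 6 ≤ m + 2) {X : Set (Fin (m+2))} {u : Fin (m+2)}
    (hm1 : u + 1 ∉ X) (hm2 : u + 2 ∉ X) :
    XVisible (cycleGraph (m+2)) X u (u + 3) := by
  have hne01 : u ≠ u + 1 := fin_shift_ne' u 0 1 (by omega) (by omega) (by omega) (fs0 u) (fs1 u)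
  have hne02 : u ≠ u + 2 := fin_shift_ne' u 0 2 (by omega) (by omega) (by omega) (fs0 u) (fs2 u)
  have hne03 : u ≠ u + 3 := fin_shift_ne' u 0 3 (by omega) (by omega) (by omega) (fs0 u) (fs3 u)
  have hne12 : u + 1 ≠ u + 2 := fin_shift_ne' u 1 2 (by omega) (by omega) (by omega) (fs1 u) (fs2 u)
  have hne13 : u + 1 ≠ u + 3 := fin_shift_ne' u 1 3 (by omega) (by omega) (by omega) (fs1 u) (fs3 u)
  have hne23 : u + 2 ≠ u + 3 := fin_shift_ne' u 2 3 (by omega) (by omega) (by omega) (fs2 u) (fs3 u)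
  refine ⟨Walk.cons (adj_gen u (u+1) (by ring)) (Walk.cons (adj_gen (u+1) (u+2) (by ring))
      (Walk.cons (adj_gen (u+2) (u+3) (by ring)) Walk.nil)), ?_, ?_, ?_⟩
  · simp [Walk.isPath_def, List.nodup_cons, hne01, hne02, hne03, hne12, hne13, hne23]
  · have hd3 : (cycleGraph (m+2)).dist u (u+3) = 3 := by
      have hle : (cycleGraph (m+2)).dist u (u+3) ≤ 3 := by
        have := dist_le (Walk.cons (adj_gen u (u+1) (by ring))
          (Walk.cons (adj_gen (u+1) (u+2) (by ring))
          (Walk.cons (adj_gen (u+2) (u+3) (by ring)) Walk.nil)))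
        simp only [Walk.length_cons, Walk.length_nil] at this
        omega
      have h0 : (cycleGraph (m+2)).dist u (u+3) ≠ 0 :=
        fun h => hne03 ((conn.dist_eq_zero_iff).mp h)
      have h1 : (cycleGraph (m+2)).dist u (u+3) ≠ 1 := by
        intro h1
        have h := dist_eq_one_iff_adj.mp h1
        rcases adj_cases h with h | h
        · exact fin_shift_ne' u 3 1 (by omega) (by omega) (by omega) (fs3 u) (fs1 u) h
        · exact fin_shift_ne' u 3 (m+2-1) (by omega) (by omega) (by omega) (fs3 u)
            (fm u 1 (by omega)) h
      have h2 : (cycleGraph (m+2)).dist u (u+3) ≠ 2 := by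
        intro hd
        obtain ⟨p, hplen⟩ := exists_walk_of_dist_ne_zero (G := cycleGraph (m+2)) (u := u)
          (v := u + 3) (by omega)
        rw [hd] at hplen
        rcases walk_destruct p with ⟨h, hl⟩ | ⟨w1, ha1, q1, hl1, -⟩
        · omega
        rcases adj_cases ha1 with rfl | rfl <;>
          rcases walk_destruct q1 with ⟨h, hl⟩ | ⟨w2, ha2, q2, hl2, -⟩
        · omega
        · rcases adj_cases ha2 with rfl | rfl <;>
            rcases walk_destruct q2 with ⟨h, hl⟩ | ⟨_, _, _, hl3, -⟩
          · exact fin_shift_ne' u 2 3 (by omega) (by omega) (by omega) (by rw [fs2]; ring) (fs3 u) h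
          · omega
          · exact fin_shift_ne' u 0 3 (by omega) (by omega) (by omega) (by rw [fs0]; ring) (fs3 u) h
          · omega
        · omega
        · rcases adj_cases ha2 with rfl | rfl <;>
            rcases walk_destruct q2 with ⟨h, hl⟩ | ⟨_, _, _, hl3, -⟩
          · exact fin_shift_ne' u 0 3 (by omega) (by omega) (by omega) (by rw [fs0]; ring) (fs3 u) h
          · omega
          · exact fin_shift_ne' u (m+2-2) 3 (by omega) (by omega) (by omega)
              (by rw [fm u 2 (by omega)]; ring) (fs3 u) h
          · omega
      omega
    simpa using hd3.symm
  · intro w hw hwX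
    simp only [Walk.support_cons, Walk.support_nil, List.mem_cons, List.mem_singleton] at hw
    rcases hw with rfl | rfl | rfl | rfl | h
    · exact Or.inl rfl
    · exact absurd hwX hm1
    · exact absurd hwX hm2
    · exact Or.inr rfl
    · simp at h

lemma neighbor (h5 : 5 ≤ m + 2) {X : Set (Fin (m+2))}
    (hd : IsDualMVSet (cycleGraph (m+2)) X) {x : Fin (m+2)} (hx : x ∈ X) :
    x + 1 ∈ X ∨ x - 1 ∈ X := by
  by_contra hc
  push_neg at hc
  obtain ⟨h1, h2⟩ := hc
  have hvis := hd.2 (x - 1) h2 (x + 1) h1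
  have e2 : x - 1 + 2 = x + 1 := by ring
  rw [← e2] at hvis
  exact notVis2 h5 (by rw [show x - 1 + 1 = x from by ring]; exact hx) hvis

lemma run2 (h5 : 5 ≤ m + 2) {X : Set (Fin (m+2))}
    (hd : IsDualMVSet (cycleGraph (m+2)) X) {x : Fin (m+2)} (hx : x ∈ X) :
    ∃ y, y ∈ X ∧ y + 1 ∈ X ∧ y - 1 ∉ X ∧ y + 2 ∉ X := by
  have main : ∀ y : Fin (m+2), y ∈ X → y + 1 ∈ X → y - 1 ∉ X ∧ y + 2 ∉ X := by
    intro y hy hy1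
    constructor
    · intro hym
      have hvis := hd.1 (y - 1) hym (y + 1) hy1
      rw [← show y - 1 + 2 = y + 1 from by ring] at hvis
      exact notVis2 h5 (by rw [show y - 1 + 1 = y from by ring]; exact hy) hvis
    · intro hy2
      exact notVis2 h5 hy1 (hd.1 y hy (y + 2) hy2)
  rcases neighbor h5 hd hx with h | h
  · exact ⟨x, hx, h, main x hx h⟩
  · refine ⟨x - 1, h, by rw [show x - 1 + 1 = x from by ring]; exact hx, main _ h ?_⟩
    rw [show x - 1 + 1 = x from by ring]; exact hx

lemma key7 (h7 : 7 ≤ m + 2) {X : Set (Fin (m+2))}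
    (hd : IsDualMVSet (cycleGraph (m+2)) X) : X = ∅ := by
  by_contra hne
  obtain ⟨x, hx⟩ := Set.nonempty_iff_ne_empty.mpr hne
  obtain ⟨y, hy, hy1, hym, hy2⟩ := run2 (by omega) hd hx
  have hvis := hd.2 (y - 1) hym (y + 2) hy2
  rw [← show y - 1 + 3 = y + 2 from by ring] at hvis
  exact notVis3 h7 (by rw [show y - 1 + 1 = y from by ring]; exact hy)
    (by rw [show y - 1 + 2 = y + 1 from by ring]; exact hy1) hvis

lemma dualEmpty : IsDualMVSet (cycleGraph (m+2)) (∅ : Set (Fin (m+2))) := by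
  constructor
  · intro u hu; exact absurd hu (Set.notMem_empty u)
  · intro u _ v _
    obtain ⟨p, hp, hlen⟩ := (conn (m := m)).exists_path_of_dist u v
    exact ⟨p, hp, hlen, fun w _ hw => absurd hw (Set.notMem_empty w)⟩

lemma sSup_eq_of {S : Set ℕ} {a : ℕ} (ha : a ∈ S) (hb : ∀ k ∈ S, k ≤ a) : sSup S = a :=
  le_antisymm (csSup_le ⟨a, ha⟩ hb) (le_csSup ⟨a, hb⟩ ha)

lemma muDual_seven (h7 : 7 ≤ m + 2) : muDual (cycleGraph (m+2)) = 0 := by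
  rw [muDual]
  apply sSup_eq_of
  · exact ⟨∅, dualEmpty, by simp⟩
  · rintro k ⟨X, hX, rfl⟩
    rw [key7 h7 hX]
    simp

end cyc

section small

lemma muDual_three : muDual (cycleGraph 3) = 3 := by
  rw [muDual]
  apply sSup_eq_of
  · refine ⟨Set.univ, ⟨?_, ?_⟩, by rw [Set.ncard_univ]; simp⟩
    · intro u _ v _
      rcases eq_or_ne u v with rfl | hne
      · exact visSelf _ _ _
      · exact visAdj _ (by rw [cycleGraph_three_eq_top]; exact hne)
    · intro u hu
      exact absurd (Set.mem_univ u) hu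
  · rintro k ⟨X, -, rfl⟩
    have := Set.ncard_le_ncard (Set.subset_univ X) Set.finite_univ
    rwa [Set.ncard_univ, Nat.card_eq_fintype_card, Fintype.card_fin] at this

lemma muDual_four : muDual (cycleGraph 4) = 3 := by
  rw [muDual]
  apply sSup_eq_of
  · refine ⟨{0, 1, 2}, ⟨?_, ?_⟩, ?_⟩
    · have h20 : XVisible (cycleGraph 4) {0, 1, 2} 2 0 := by
        have := vis2 (m := 2) (by omega) (X := ({0, 1, 2} : Set (Fin 4))) (u := 2)
          (by simp only [Set.mem_insert_iff, Set.mem_singleton_iff]; decide)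
        rwa [show ((2 : Fin 4) + 2) = 0 from by decide] at this
      intro u hu v hv
      simp only [Set.mem_insert_iff, Set.mem_singleton_iff] at hu hv
      rcases hu with rfl | rfl | rfl <;> rcases hv with rfl | rfl | rfl
      · exact visSelf _ _ _
      · exact visAdj _ (by decide)
      · exact visSymm h20
      · exact visAdj _ (by decide)
      · exact visSelf _ _ _
      · exact visAdj _ (by decide)
      · exact h20
      · exact visAdj _ (by decide)
      · exact visSelf _ _ _
    · intro u hu v hv
      simp only [Set.mem_insert_iff, Set.mem_singleton_iff] at hu hv
      push_neg at hu hv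
      have hu3 : u = 3 := by
        have : ∀ w : Fin 4, w ≠ 0 → w ≠ 1 → w ≠ 2 → w = 3 := by decide
        exact this u hu.1 hu.2.1 hu.2.2
      have hv3 : v = 3 := by
        have : ∀ w : Fin 4, w ≠ 0 → w ≠ 1 → w ≠ 2 → w = 3 := by decide
        exact this v hv.1 hv.2.1 hv.2.2
      subst hu3 hv3
      exact visSelf _ _ _
    · rw [Set.ncard_insert_of_notMem
          (by simp only [Set.mem_insert_iff, Set.mem_singleton_iff]; decide),
        Set.ncard_insert_of_notMem (by simp only [Set.mem_singleton_iff]; decide),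
        Set.ncard_singleton]
  · rintro k ⟨X, hX, rfl⟩
    by_contra hk
    push_neg at hk
    have hXuniv : X = Set.univ := by
      apply Set.eq_of_subset_of_ncard_le (Set.subset_univ X) ?_ Set.finite_univ
      rw [Set.ncard_univ, Nat.card_eq_fintype_card, Fintype.card_fin]
      omega
    subst hXuniv
    exact notVisSecond (m := 2) (by decide) (Set.mem_univ _) (Set.mem_univ _)
      (by decide) (by decide) (hX.1 0 (Set.mem_univ _) 2 (Set.mem_univ _))

end small

section small2

lemma muDual_five : muDual (cycleGraph 5) = 2 := by
  rw [muDual]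
  apply sSup_eq_of
  · refine ⟨{0, 1}, ⟨?_, ?_⟩, Set.ncard_pair (by decide)⟩
    · intro u hu v hv
      simp only [Set.mem_insert_iff, Set.mem_singleton_iff] at hu hv
      rcases hu with rfl | rfl <;> rcases hv with rfl | rfl
      · exact visSelf _ _ _
      · exact visAdj _ (by decide)
      · exact visSymm (visAdj _ (by decide))
      · exact visSelf _ _ _
    · have h24 : XVisible (cycleGraph 5) {0, 1} 2 4 := by
        have := vis2 (m := 3) (by omega) (X := ({0, 1} : Set (Fin 5))) (u := 2)
          (by simp only [Set.mem_insert_iff, Set.mem_singleton_iff]; decide)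
        rwa [show ((2 : Fin 5) + 2) = 4 from by decide] at this
      intro u hu v hv
      simp only [Set.mem_insert_iff, Set.mem_singleton_iff] at hu hv
      push_neg at hu hv
      have henum : ∀ w : Fin 5, w ≠ 0 → w ≠ 1 → w = 2 ∨ w = 3 ∨ w = 4 := by decide
      rcases henum u hu.1 hu.2 with rfl | rfl | rfl <;>
        rcases henum v hv.1 hv.2 with rfl | rfl | rfl
      · exact visSelf _ _ _
      · exact visAdj _ (by decide)
      · exact h24
      · exact visSymm (visAdj _ (by decide))
      · exact visSelf _ _ _
      · exact visAdj _ (by decide)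
      · exact visSymm h24
      · exact visSymm (visAdj _ (by decide))
      · exact visSelf _ _ _
  · rintro k ⟨X, hX, rfl⟩
    by_contra hk
    push_neg at hk
    obtain ⟨x, hx⟩ := Set.nonempty_of_ncard_ne_zero (s := X) (by omega)
    obtain ⟨y, hy, hy1, hym, hy2⟩ := run2 (m := 3) (by omega) hX hx
    have hns : ¬ X ⊆ {y, y + 1} := by
      intro hsub
      have := Set.ncard_le_ncard hsub (Set.toFinite _)
      rw [Set.ncard_pair (fin_shift_ne' y 0 1 (by omega) (by omega) (by omega) (fs0 y) (fs1 y))]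
        at this
      omega
    obtain ⟨z, hz, hzn⟩ := Set.not_subset.mp hns
    simp only [Set.mem_insert_iff, Set.mem_singleton_iff] at hzn
    push_neg at hzn
    have hzy : z = y + (z - y) := by ring
    have hd3 : z - y = 3 := by
      have hd35 : ∀ d : Fin 5, d ≠ 0 → d ≠ 1 → d ≠ 2 → d ≠ 4 → d = 3 := by decide
      apply hd35
      · intro h; exact hzn.1 (by rw [hzy, h]; ring)
      · intro h; exact hzn.2 (by rw [hzy, h])
      · intro h
        have hz2 : z = y + 2 := by rw [hzy, h]
        rw [hz2] at hz
        exact hy2 hz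
      · intro h
        have hz4 : z = y - 1 := by
          rw [hzy, h, show (4 : Fin 5) = -1 from by decide]; ring
        rw [hz4] at hz
        exact hym hz
    have hz3 : z = y + 3 := by rw [hzy, hd3]
    rw [hz3] at hz
    rcases neighbor (m := 3) (by omega) hX hz with h | h
    · apply hym
      rwa [show y + 3 + 1 = y - 1 from by
        rw [show y + 3 + 1 = y + 4 from by ring, show (4 : Fin 5) = -1 from by decide]; ring] at h
    · apply hy2
      rwa [show y + 3 - 1 = y + 2 from by ring] at h

lemma muDual_six : muDual (cycleGraph 6) = 2 := by
  rw [muDual]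
  apply sSup_eq_of
  · refine ⟨{0, 1}, ⟨?_, ?_⟩, Set.ncard_pair (by decide)⟩
    · intro u hu v hv
      simp only [Set.mem_insert_iff, Set.mem_singleton_iff] at hu hv
      rcases hu with rfl | rfl <;> rcases hv with rfl | rfl
      · exact visSelf _ _ _
      · exact visAdj _ (by decide)
      · exact visSymm (visAdj _ (by decide))
      · exact visSelf _ _ _
    · have h24 : XVisible (cycleGraph 6) {0, 1} 2 4 := by
        have := vis2 (m := 4) (by omega) (X := ({0, 1} : Set (Fin 6))) (u := 2)
          (by simp only [Set.mem_insert_iff, Set.mem_singleton_iff]; decide)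
        rwa [show ((2 : Fin 6) + 2) = 4 from by decide] at this
      have h35 : XVisible (cycleGraph 6) {0, 1} 3 5 := by
        have := vis2 (m := 4) (by omega) (X := ({0, 1} : Set (Fin 6))) (u := 3)
          (by simp only [Set.mem_insert_iff, Set.mem_singleton_iff]; decide)
        rwa [show ((3 : Fin 6) + 2) = 5 from by decide] at this
      have h25 : XVisible (cycleGraph 6) {0, 1} 2 5 := by
        have := vis3 (m := 4) (by omega) (X := ({0, 1} : Set (Fin 6))) (u := 2)
          (by simp only [Set.mem_insert_iff, Set.mem_singleton_iff]; decide)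
          (by simp only [Set.mem_insert_iff, Set.mem_singleton_iff]; decide)
        rwa [show ((2 : Fin 6) + 3) = 5 from by decide] at this
      intro u hu v hv
      simp only [Set.mem_insert_iff, Set.mem_singleton_iff] at hu hv
      push_neg at hu hv
      have henum : ∀ w : Fin 6, w ≠ 0 → w ≠ 1 → w = 2 ∨ w = 3 ∨ w = 4 ∨ w = 5 := by decide
      rcases henum u hu.1 hu.2 with rfl | rfl | rfl | rfl <;>
        rcases henum v hv.1 hv.2 with rfl | rfl | rfl | rfl
      · exact visSelf _ _ _
      · exact visAdj _ (by decide)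
      · exact h24
      · exact h25
      · exact visSymm (visAdj _ (by decide))
      · exact visSelf _ _ _
      · exact visAdj _ (by decide)
      · exact h35
      · exact visSymm h24
      · exact visSymm (visAdj _ (by decide))
      · exact visSelf _ _ _
      · exact visAdj _ (by decide)
      · exact visSymm h25
      · exact visSymm h35
      · exact visSymm (visAdj _ (by decide))
      · exact visSelf _ _ _
  · rintro k ⟨X, hX, rfl⟩
    by_contra hk
    push_neg at hk
    obtain ⟨x, hx⟩ := Set.nonempty_of_ncard_ne_zero (s := X) (by omega)
    obtain ⟨y, hy, hy1, hym, hy2⟩ := run2 (m := 4) (by omega) hX hx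
    have hns : ¬ X ⊆ {y, y + 1} := by
      intro hsub
      have := Set.ncard_le_ncard hsub (Set.toFinite _)
      rw [Set.ncard_pair (fin_shift_ne' y 0 1 (by omega) (by omega) (by omega) (fs0 y) (fs1 y))]
        at this
      omega
    obtain ⟨z, hz, hzn⟩ := Set.not_subset.mp hns
    simp only [Set.mem_insert_iff, Set.mem_singleton_iff] at hzn
    push_neg at hzn
    have hzy : z = y + (z - y) := by ring
    -- in both cases we show y + 3 ∈ X
    have hy3 : y + 3 ∈ X := by
      have hd34 : z - y = 3 ∨ z - y = 4 := by
        have hd : ∀ d : Fin 6, d ≠ 0 → d ≠ 1 → d ≠ 2 → d ≠ 5 → d = 3 ∨ d = 4 := by decide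
        apply hd
        · intro h; exact hzn.1 (by rw [hzy, h]; ring)
        · intro h; exact hzn.2 (by rw [hzy, h])
        · intro h
          have hz2 : z = y + 2 := by rw [hzy, h]
          rw [hz2] at hz
          exact hy2 hz
        · intro h
          have hz5 : z = y - 1 := by
            rw [hzy, h, show (5 : Fin 6) = -1 from by decide]; ring
          rw [hz5] at hz
          exact hym hz
      rcases hd34 with h | h
      · rwa [← show y + (z - y) = z from by ring, h] at hz
      · have hz4 : z = y + 4 := by rw [hzy, h]
        rw [hz4] at hz
        rcases neighbor (m := 4) (by omega) hX hz with h' | h'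
        · exfalso
          apply hym
          rwa [show y + 4 + 1 = y - 1 from by
            rw [show y + 4 + 1 = y + 5 from by ring, show (5 : Fin 6) = -1 from by decide];
              ring] at h'
        · rwa [show y + 4 - 1 = y + 3 from by ring] at h'
    -- now the pair (y+2, y+5) is not visible
    have hy5 : y + 5 ∉ X := by
      rwa [show y + 5 = y - 1 from by
        rw [show (5 : Fin 6) = -1 from by decide]; ring]
    have hvis := hX.2 (y + 2) hy2 (y + 5) hy5
    apply notVisSecond (m := 4) (u := y + 2) (v := y + 5) ?_ ?_ ?_ ?_ ?_ hvis
    · exact fin_shift_ne' y 2 5 (by omega) (by omega) (by omega) (fs2 y) (by norm_num)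
    · rwa [show y + 2 + 1 = y + 3 from by ring]
    · rwa [show y + 2 - 1 = y + 1 from by ring]
    · rw [show y + 2 + 1 = y + 3 from by ring]
      exact fin_shift_ne' y 3 5 (by omega) (by omega) (by omega) (fs3 y) (by norm_num)
    · rw [show y + 2 - 1 = y + 1 from by ring]
      exact fin_shift_ne' y 1 5 (by omega) (by omega) (by omega) (fs1 y) (by norm_num)

end small2

end CycleHelpers

theorem muDual_cycleGraph (n : ℕ) (hn : 3 ≤ n) :
    muDual (cycleGraph n) = if n ≤ 4 then 3 else if n ≤ 6 then 2 else 0 := by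
  have h : n = 3 ∨ n = 4 ∨ n = 5 ∨ n = 6 ∨ 7 ≤ n := by omega
  rcases h with rfl | rfl | rfl | rfl | h7
  · rw [if_pos (by norm_num)]; exact muDual_three
  · rw [if_pos (by norm_num)]; exact muDual_four
  · rw [if_neg (by norm_num), if_pos (by norm_num)]; exact muDual_five
  · rw [if_neg (by norm_num), if_pos (by norm_num)]; exact muDual_six
  · obtain ⟨m, rfl⟩ : ∃ m, n = m + 2 := ⟨n - 2, by omega⟩
    rw [if_neg (by omega), if_neg (by omega)]
    exact muDual_seven (by omega)
end

section
/- For the cycle graph C_n on n vertices, the outer mutual-visibility number satisfies: μ_o(C_3) = 3 and μ_o(C_n) = 2 for every n ≥ 4. -/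
open SimpleGraph

namespace CycleAux

open Fin.NatCast Fin.CommRing

variable {n : ℕ}

lemma adj_succ (u : Fin (n+2)) : (cycleGraph (n+2)).Adj u (u+1) :=
  cycleGraph_adj.mpr (Or.inr (add_sub_cancel_left u 1))

def walkUp (u : Fin (n+2)) : (m : ℕ) → (cycleGraph (n+2)).Walk u (u + m)
  | 0 => Walk.nil.copy rfl (by simp)
  | m+1 => Walk.cons (adj_succ u) ((walkUp (u+1) m).copy rfl (by push_cast; ring))

@[simp] lemma walkUp_length (u : Fin (n+2)) (m : ℕ) : (walkUp u m).length = m := by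
  induction m generalizing u with
  | zero => simp [walkUp]
  | succ m ih => simp [walkUp, ih]

lemma walkUp_support (u : Fin (n+2)) (m : ℕ) :
    (walkUp u m).support = (List.range (m+1)).map (fun i : ℕ => u + (i : Fin (n+2))) := by
  induction m generalizing u with
  | zero => simp [walkUp, List.range_succ]
  | succ m ih =>
    rw [walkUp, Walk.support_cons, Walk.support_copy, ih]
    conv_rhs => rw [List.range_succ_eq_map, List.map_cons, List.map_map]
    congr 1
    · simp
    · apply List.map_congr_left
      intro i _
      simp only [Function.comp_apply, Nat.succ_eq_add_one]
      push_cast; ring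

lemma val_succ (z : Fin (n+2)) : (z + 1).val = if z.val = n+1 then 0 else z.val + 1 := by
  have hz := z.isLt
  rw [Fin.add_def, Fin.val_one]
  split_ifs with h
  · rw [h]; simp
  · exact Nat.mod_eq_of_lt (by omega)

lemma val_pred (z : Fin (n+2)) : (z - 1).val = if z.val = 0 then n+1 else z.val - 1 := by
  have hz := z.isLt
  rw [Fin.sub_def, Fin.val_one]
  split_ifs with h
  · rw [h]; exact Nat.mod_eq_of_lt (by omega)
  · have h2 : n + 2 - 1 + z.val = (z.val - 1) + (n+2) := by omega
    simp only [Fin.val_mk]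
    rw [h2, Nat.add_mod_right]
    exact Nat.mod_eq_of_lt (by omega)

lemma walkUp_isPath (u : Fin (n+2)) {m : ℕ} (hm : m ≤ n + 1) : (walkUp u m).IsPath := by
  rw [SimpleGraph.Walk.isPath_def, walkUp_support]
  refine List.Nodup.map_on ?_ List.nodup_range
  intro i hi j hj hij
  rw [List.mem_range] at hi hj
  have : ((i : Fin (n+2))) = (j : Fin (n+2)) := by
    have := add_left_cancel hij
    exact this
  have hi' : ((i : Fin (n+2))).val = i := Fin.val_cast_of_lt (by omega)
  have hj' : ((j : Fin (n+2))).val = j := Fin.val_cast_of_lt (by omega)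
  rw [← hi', ← hj', this]

lemma length_lb {u v : Fin (n+2)} (p : (cycleGraph (n+2)).Walk u v) :
    min (v - u).val (n + 2 - (v - u).val) ≤ p.length := by
  induction p with
  | nil => simp
  | @cons u w v h q ih =>
    rcases cycleGraph_adj.mp h with h1 | h1
    · -- u - w = 1, so w = u - 1, v - u = (v - w) - 1
      have hw : v - u = (v - w) - 1 := by
        rw [← h1]; ring
      have hv := val_pred (v - w)
      have h1 := (v - w).isLt
      rw [SimpleGraph.Walk.length_cons, hw]
      split_ifs at hv <;> omega
    · -- w - u = 1, v - u = (v - w) + 1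
      have hw : v - u = (v - w) + 1 := by
        rw [← h1]; ring
      have hv := val_succ (v - w)
      have h1 := (v - w).isLt
      rw [SimpleGraph.Walk.length_cons, hw]
      split_ifs at hv <;> omega

lemma length_eq_dist {u v : Fin (n+2)} (p : (cycleGraph (n+2)).Walk u v)
    (hp : p.length = min (v - u).val (n + 2 - (v - u).val)) :
    p.length = (cycleGraph (n+2)).dist u v := by
  refine le_antisymm ?_ (SimpleGraph.dist_le p)
  obtain ⟨q, hq⟩ := SimpleGraph.Reachable.exists_walk_length_eq_dist ⟨p⟩
  rw [← hq, hp]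
  exact length_lb q

lemma mod_small {x : ℕ} (hx : x < 2*(n+2)) :
    x % (n+2) = if x < n+2 then x else x - (n+2) := by
  split_ifs with h
  · exact Nat.mod_eq_of_lt h
  · rw [Nat.mod_eq_sub_mod (by omega), Nat.mod_eq_of_lt (by omega)]

lemma val_sub_add_val_sub {u v : Fin (n+2)} (h : u ≠ v) :
    (u - v).val + (v - u).val = n + 2 := by
  have h0 : (u - v) + (v - u) = 0 := by ring
  have h5 := congrArg Fin.val h0
  rw [Fin.add_def] at h5
  simp only [Fin.val_mk, Fin.val_zero] at h5
  have h1 := (u - v).isLt; have h2 := (v - u).isLt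
  have h3 : (u - v).val ≠ 0 := by
    intro h4
    exact h (sub_eq_zero.mp (Fin.ext h4))
  have hz : (0 : Fin (n+2)).val = 0 := rfl
  rw [mod_small (by omega)] at h5
  split_ifs at h5 <;> omega

lemma val_add_cast (z : Fin (n+2)) {i : ℕ} (hi : i < n+2) :
    (z + (i : Fin (n+2))).val = (z.val + i) % (n+2) := by
  rw [Fin.add_def, Fin.val_cast_of_lt hi]

lemma exists_geo_up {u v : Fin (n+2)} (h : (v - u).val ≤ n + 2 - (v - u).val) :
    ∃ p : (cycleGraph (n+2)).Walk u v, p.IsPath ∧ p.length = (cycleGraph (n+2)).dist u v ∧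
      ∀ w ∈ p.support, ∃ i ≤ (v - u).val, w = u + (i : Fin (n+2)) := by
  have hvu := (v - u).isLt
  have hcast : u + (((v - u).val : ℕ) : Fin (n+2)) = v := by
    rw [Fin.cast_val_eq_self]; ring
  refine ⟨(walkUp u (v - u).val).copy rfl hcast, ?_, ?_, ?_⟩
  · exact ((SimpleGraph.Walk.isPath_copy _ rfl hcast).mpr (walkUp_isPath u (by omega)))
  · refine length_eq_dist _ ?_
    rw [SimpleGraph.Walk.length_copy, walkUp_length]
    omega
  · intro w hw
    rw [SimpleGraph.Walk.support_copy, walkUp_support, List.mem_map] at hw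
    obtain ⟨i, hi, rfl⟩ := hw
    rw [List.mem_range] at hi
    exact ⟨i, by omega, rfl⟩

lemma exists_geo_down {u v : Fin (n+2)} (h : (u - v).val ≤ n + 2 - (u - v).val) :
    ∃ p : (cycleGraph (n+2)).Walk u v, p.IsPath ∧ p.length = (cycleGraph (n+2)).dist u v ∧
      ∀ w ∈ p.support, ∃ i ≤ (u - v).val, w = v + (i : Fin (n+2)) := by
  have huv := (u - v).isLt
  have hcast : v + (((u - v).val : ℕ) : Fin (n+2)) = u := by
    rw [Fin.cast_val_eq_self]; ring
  refine ⟨((walkUp v (u - v).val).copy rfl hcast).reverse, ?_, ?_, ?_⟩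
  · exact ((SimpleGraph.Walk.isPath_copy _ rfl hcast).mpr (walkUp_isPath v (by omega))).reverse
  · refine length_eq_dist _ ?_
    rw [SimpleGraph.Walk.length_reverse, SimpleGraph.Walk.length_copy, walkUp_length]
    rcases eq_or_ne u v with rfl | hne
    · simp
    · have := val_sub_add_val_sub hne
      omega
  · intro w hw
    rw [SimpleGraph.Walk.support_reverse, List.mem_reverse, SimpleGraph.Walk.support_copy,
      walkUp_support, List.mem_map] at hw
    obtain ⟨i, hi, rfl⟩ := hw
    rw [List.mem_range] at hi
    exact ⟨i, by omega, rfl⟩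

lemma walk_stay {A : Set (Fin (n+2))} {a b : Fin (n+2)}
    (hA : ∀ x ∈ A, ∀ y, (cycleGraph (n+2)).Adj x y → y = a ∨ y = b ∨ y ∈ A) :
    ∀ {x y : Fin (n+2)} (p : (cycleGraph (n+2)).Walk x y), x ∈ A →
      a ∉ p.support → b ∉ p.support → y ∈ A := by
  intro x y p
  induction p with
  | nil => exact fun h _ _ => h
  | @cons x w y h q ih =>
    intro hx ha hb
    rw [SimpleGraph.Walk.support_cons, List.mem_cons] at ha hb
    push_neg at ha hb
    rcases hA x hx w h with h1 | h1 | h1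
    · exact absurd (h1 ▸ q.start_mem_support) ha.2
    · exact absurd (h1 ▸ q.start_mem_support) hb.2
    · exact ih h1 ha.2 hb.2

lemma exists_mid {u v : Fin (n+2)} (p : (cycleGraph (n+2)).Walk u v)
    (h2 : 2 ≤ min (v - u).val (n + 2 - (v - u).val)) :
    ∃ w ∈ p.support, w ≠ u ∧ w ≠ v := by
  cases p with
  | nil => simp at h2
  | @cons u w v h q =>
    refine ⟨w, ?_, h.ne', ?_⟩
    · rw [SimpleGraph.Walk.support_cons]
      exact List.mem_cons_of_mem _ q.start_mem_support
    · rintro rfl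
      have := length_lb (SimpleGraph.Walk.cons h SimpleGraph.Walk.nil)
      simp only [SimpleGraph.Walk.length_cons, SimpleGraph.Walk.length_nil] at this
      omega

lemma ncard_le_two (m : ℕ) (X : Set (Fin (m+4))) (hX : IsOuterMVSet (cycleGraph (m+4)) X) :
    X.ncard ≤ 2 := by
  classical
  by_contra hc
  push_neg at hc
  obtain ⟨Y, hYX, hY3⟩ := Set.exists_subset_card_eq (show 3 ≤ X.ncard by omega)
  rw [Set.ncard_eq_three] at hY3
  obtain ⟨x, y, z, hxy, hxz, hyz, rfl⟩ := hY3
  have hxX : x ∈ X := hYX (by simp)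
  have hyX : y ∈ X := hYX (by simp)
  have hzX : z ∈ X := hYX (by simp)
  by_cases hall : ∀ v, v ∈ X
  · obtain ⟨p, hp, hl, hsup⟩ := hX.1 0 (hall 0) 2 (hall 2)
    have h2 : ((2 : Fin (m+4)) - 0).val = 2 := by
      rw [sub_zero]
      have h3 : (2 : Fin (m+4)) = ((2:ℕ) : Fin (m+4)) := by norm_cast
      rw [h3, Fin.val_cast_of_lt (by omega)]
    obtain ⟨w, hw, hwu, hwv⟩ := exists_mid p (by rw [h2]; omega)
    rcases hsup w hw (hall w) with h | h
    · exact hwu h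
    · exact hwv h
  · push_neg at hall
    obtain ⟨v₀, hv₀⟩ := hall
    have hxv : x ≠ v₀ := fun h => hv₀ (h ▸ hxX)
    have hcastx : v₀ + (((x - v₀).val : ℕ) : Fin (m+4)) = x := by
      rw [Fin.cast_val_eq_self]; ring
    have hcastx' : v₀ - (((v₀ - x).val : ℕ) : Fin (m+4)) = x := by
      rw [Fin.cast_val_eq_self]; ring
    have hP : ∃ t : ℕ, 0 < t ∧ v₀ + (t : Fin (m+4)) ∈ X := by
      refine ⟨(x - v₀).val, Nat.pos_of_ne_zero ?_, by rw [hcastx]; exact hxX⟩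
      intro h0
      exact hxv (sub_eq_zero.mp (Fin.ext h0))
    have hQ : ∃ t : ℕ, 0 < t ∧ v₀ - (t : Fin (m+4)) ∈ X := by
      refine ⟨(v₀ - x).val, Nat.pos_of_ne_zero ?_, by rw [hcastx']; exact hxX⟩
      intro h0
      exact hxv (sub_eq_zero.mp (Fin.ext h0)).symm
    set g := Nat.find hP with hgdef
    set s := Nat.find hQ with hsdef
    obtain ⟨hg1, hbX⟩ := Nat.find_spec hP
    obtain ⟨hs1, haX⟩ := Nat.find_spec hQ
    set b := v₀ + (g : Fin (m+4)) with hbdef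
    set a := v₀ - (s : Fin (m+4)) with hadef
    -- pick u ∈ X distinct from a and b
    obtain ⟨u, huX, hua, hub⟩ : ∃ u ∈ X, u ≠ a ∧ u ≠ b := by
      by_cases h1 : x = a
      · by_cases h2 : y = b
        · exact ⟨z, hzX, by rw [← h1]; exact fun h => hxz h.symm, by rw [← h2]; exact fun h => hyz h.symm⟩
        · exact ⟨y, hyX, by rw [← h1]; exact fun h => hxy h.symm, h2⟩
      · by_cases h2 : x = b
        · by_cases h3 : y = a
          · exact ⟨z, hzX, by rw [← h3]; exact fun h => hyz h.symm, by rw [← h2]; exact fun h => hxz h.symm⟩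
          · exact ⟨y, hyX, h3, by rw [← h2]; exact fun h => hxy h.symm⟩
        · exact ⟨x, hxX, h1, h2⟩
    have huv : u ≠ v₀ := fun h => hv₀ (h ▸ huX)
    have htu : g ≤ (u - v₀).val := by
      refine Nat.find_min' hP ⟨Nat.pos_of_ne_zero ?_, ?_⟩
      · intro h0; exact huv (sub_eq_zero.mp (Fin.ext h0))
      · rw [Fin.cast_val_eq_self]
        have : v₀ + (u - v₀) = u := by ring
        rw [this]; exact huX
    have hsu : s ≤ (v₀ - u).val := by
      refine Nat.find_min' hQ ⟨Nat.pos_of_ne_zero ?_, ?_⟩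
      · intro h0; exact huv (sub_eq_zero.mp (Fin.ext h0)).symm
      · rw [Fin.cast_val_eq_self]
        have : v₀ - (v₀ - u) = u := by ring
        rw [this]; exact huX
    have hvals := val_sub_add_val_sub huv
    have hgs : g + s ≤ m + 4 := by omega
    have hgN : g < m + 4 := by omega
    have hsN : s < m + 4 := by omega
    have hbval : (b - v₀).val = g := by
      have : b - v₀ = ((g : ℕ) : Fin (m+4)) := by rw [hbdef]; ring
      rw [this, Fin.val_cast_of_lt hgN]
    have haval : (a - v₀).val = m + 4 - s := by
      have h0 : a - v₀ = (0 : Fin (m+4)) - ((s : ℕ) : Fin (m+4)) := by rw [hadef]; ring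
      have hsne : (0 : Fin (m+4)) ≠ ((s : ℕ) : Fin (m+4)) := by
        intro h
        have h' := congrArg Fin.val h
        rw [Fin.val_cast_of_lt hsN, Fin.val_zero] at h'
        omega
      have h1 := val_sub_add_val_sub hsne
      rw [sub_zero, Fin.val_cast_of_lt hsN] at h1
      rw [h0]
      omega
    set A : Set (Fin (m+4)) := {w | (w - v₀).val < g ∨ (m+4) - s < (w - v₀).val} with hAdef
    have hclos : ∀ x' ∈ A, ∀ y', (cycleGraph (m+4)).Adj x' y' → y' = a ∨ y' = b ∨ y' ∈ A := by
      intro x' hx' y' hadj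
      by_cases hya : y' = a
      · exact Or.inl hya
      by_cases hyb : y' = b
      · exact Or.inr (Or.inl hyb)
      refine Or.inr (Or.inr ?_)
      have hya' : (y' - v₀).val ≠ m + 4 - s := by
        rw [← haval]
        intro h
        exact hya (by have := Fin.ext h; exact sub_left_injective this)
      have hyb' : (y' - v₀).val ≠ g := by
        rw [← hbval]
        intro h
        exact hyb (by have := Fin.ext h; exact sub_left_injective this)
      have hx'lt := (x' - v₀).isLt
      rcases cycleGraph_adj.mp hadj with h1 | h1
      · -- x' - y' = 1 : y' - v₀ = (x' - v₀) - 1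
        have hy : y' - v₀ = (x' - v₀) - 1 := by rw [← h1]; ring
        have hv := val_pred (x' - v₀)
        rw [hAdef] at hx' ⊢
        simp only [Set.mem_setOf_eq] at hx' ⊢
        rw [hy] at hya' hyb' ⊢
        split_ifs at hv <;> rw [hv] at hya' hyb' ⊢ <;> omega
      · have hy : y' - v₀ = (x' - v₀) + 1 := by rw [← h1]; ring
        have hv := val_succ (x' - v₀)
        rw [hAdef] at hx' ⊢
        simp only [Set.mem_setOf_eq] at hx' ⊢
        rw [hy] at hya' hyb' ⊢
        split_ifs at hv <;> rw [hv] at hya' hyb' ⊢ <;> omega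
    have hv₀A : v₀ ∈ A := by
      rw [hAdef]; simp only [Set.mem_setOf_eq, sub_self, Fin.val_zero]
      omega
    have huA : u ∉ A := by
      rw [hAdef]; simp only [Set.mem_setOf_eq]
      push_neg
      omega
    obtain ⟨p, hp, hl, hsup⟩ := hX.2 u huX v₀ hv₀
    have hab : a ∈ p.support ∨ b ∈ p.support := by
      by_contra hcon
      push_neg at hcon
      refine huA (walk_stay hclos p.reverse hv₀A ?_ ?_)
      · rw [SimpleGraph.Walk.support_reverse, List.mem_reverse]; exact hcon.1
      · rw [SimpleGraph.Walk.support_reverse, List.mem_reverse]; exact hcon.2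
    rcases hab with h | h
    · rcases hsup a h haX with h' | h'
      · exact hua h'.symm
      · exact hv₀ (h' ▸ haX)
    · rcases hsup b h hbX with h' | h'
      · exact hub h'.symm
      · exact hv₀ (h' ▸ hbX)

lemma pair_outer (m : ℕ) :
    IsOuterMVSet (cycleGraph (m+4)) {0, (((m+4)/2 : ℕ) : Fin (m+4))} := by
  set k : ℕ := (m+4)/2 with hkdef
  set κ : Fin (m+4) := ((k : ℕ) : Fin (m+4)) with hκdef
  have hκv : κ.val = k := Fin.val_cast_of_lt (by omega)
  have claim : ∀ u ∈ ({0, κ} : Set (Fin (m+4))), ∀ v,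
      XVisible (cycleGraph (m+4)) {0, κ} u v := by
    intro u hu v
    simp only [Set.mem_insert_iff, Set.mem_singleton_iff] at hu
    rcases hu with rfl | rfl
    · -- u = 0
      have hdlt := (v - (0 : Fin (m+4))).isLt
      by_cases hcase : (v - (0 : Fin (m+4))).val ≤ (m+4) - (v - 0).val
      · obtain ⟨p, hp, hl, hsup⟩ := exists_geo_up (n := m+2) hcase
        refine ⟨p, hp, hl, ?_⟩
        intro w hw hwX
        obtain ⟨i, hi, rfl⟩ := hsup w hw
        simp only [Set.mem_insert_iff, Set.mem_singleton_iff] at hwX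
        rcases hwX with h0 | hκw
        · exact Or.inl h0
        · right
          rw [zero_add] at hκw ⊢
          have hiv : ((i : Fin (m+4))).val = i := Fin.val_cast_of_lt (by omega)
          have h1 := congrArg Fin.val hκw
          rw [hiv, hκv] at h1
          have hv2 : (((v - (0:Fin (m+4))).val : ℕ) : Fin (m+4)) = v := by
            rw [Fin.cast_val_eq_self]; ring
          rw [← hv2]
          congr 1
          omega
      · have hne : (0 : Fin (m+4)) ≠ v := by
          rintro rfl
          simp at hcase
        have hvals := val_sub_add_val_sub hne
        obtain ⟨p, hp, hl, hsup⟩ := exists_geo_down (n := m+2) (u := (0 : Fin (m+4))) (v := v)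
          (by omega)
        refine ⟨p, hp, hl, ?_⟩
        intro w hw hwX
        obtain ⟨i, hi, rfl⟩ := hsup w hw
        simp only [Set.mem_insert_iff, Set.mem_singleton_iff] at hwX
        have hvv : v.val = (v - 0).val := by rw [sub_zero]
        have hwval : (v + (i : Fin (m+4))).val = (v.val + i) % (m+4) :=
          val_add_cast v (by omega)
        rw [mod_small (by omega)] at hwval
        rcases hwX with h0 | hκw
        · left
          have h1 := congrArg Fin.val h0
          rw [hwval] at h1
          split_ifs at h1 with hsplit
          · omega
          · have hie : i = ((0:Fin (m+4)) - v).val := by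
              rw [Fin.val_zero] at h1; omega
            rw [hie, Fin.cast_val_eq_self]; ring
        · exfalso
          have h1 := congrArg Fin.val hκw
          rw [hwval, hκv] at h1
          split_ifs at h1 <;> omega
    · -- u = κ
      have helt := (v - κ).isLt
      by_cases hcase : (v - κ).val ≤ (m+4) - (v - κ).val
      · obtain ⟨p, hp, hl, hsup⟩ := exists_geo_up (n := m+2) hcase
        refine ⟨p, hp, hl, ?_⟩
        intro w hw hwX
        obtain ⟨i, hi, rfl⟩ := hsup w hw
        simp only [Set.mem_insert_iff, Set.mem_singleton_iff] at hwX
        have hwval : (κ + (i : Fin (m+4))).val = (k + i) % (m+4) := by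
          rw [val_add_cast κ (by omega), hκv]
        rw [mod_small (by omega)] at hwval
        rcases hwX with h0 | hκw
        · right
          have h1 := congrArg Fin.val h0
          rw [hwval, Fin.val_zero] at h1
          have hie : i = (v - κ).val := by split_ifs at h1 <;> omega
          rw [hie, Fin.cast_val_eq_self]; ring
        · left
          have h1 := congrArg Fin.val hκw
          rw [hwval, hκv] at h1
          have hi0 : i = 0 := by split_ifs at h1 <;> omega
          rw [hi0]; simp
      · have hne : κ ≠ v := by
          rintro rfl
          simp at hcase
        have hvals := val_sub_add_val_sub hne
        obtain ⟨p, hp, hl, hsup⟩ := exists_geo_down (n := m+2) (u := κ) (v := v) (by omega)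
        refine ⟨p, hp, hl, ?_⟩
        intro w hw hwX
        obtain ⟨i, hi, rfl⟩ := hsup w hw
        simp only [Set.mem_insert_iff, Set.mem_singleton_iff] at hwX
        have hvval : v.val = (k + (v - κ).val) % (m+4) := by
          conv_lhs => rw [show v = κ + (((v - κ).val : ℕ) : Fin (m+4)) from by
            rw [Fin.cast_val_eq_self]; ring]
          rw [val_add_cast κ (by omega), hκv]
        have hwval : (v + (i : Fin (m+4))).val = (k + (v - κ).val + i) % (m+4) := by
          rw [val_add_cast v (by omega), hvval, Nat.mod_add_mod]
        rw [mod_small (by omega)] at hwval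
        rcases hwX with h0 | hκw
        · right
          have h1 := congrArg Fin.val h0
          rw [hwval, Fin.val_zero] at h1
          have hi0 : i = 0 := by split_ifs at h1 <;> omega
          rw [hi0]; simp
        · left
          have h1 := congrArg Fin.val hκw
          rw [hwval, hκv] at h1
          have hif : i = (κ - v).val := by split_ifs at h1 <;> omega
          rw [hif, Fin.cast_val_eq_self]; ring
  exact ⟨fun u hu v _ => claim u hu v, fun u hu v _ => claim u hu v⟩

lemma muOuter_cn (m : ℕ) : muOuter (cycleGraph (m+4)) = 2 := by
  have hκv : ((((m+4)/2 : ℕ) : Fin (m+4))).val = (m+4)/2 := Fin.val_cast_of_lt (by omega)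
  have h2 : 2 ∈ {k | ∃ X : Set (Fin (m+4)), IsOuterMVSet (cycleGraph (m+4)) X ∧ X.ncard = k} := by
    refine ⟨{0, (((m+4)/2 : ℕ) : Fin (m+4))}, pair_outer m, Set.ncard_pair ?_⟩
    intro h
    have := congrArg Fin.val h
    rw [Fin.val_zero, hκv] at this
    omega
  have hub : ∀ j ∈ {k | ∃ X : Set (Fin (m+4)), IsOuterMVSet (cycleGraph (m+4)) X ∧ X.ncard = k},
      j ≤ 2 := by
    rintro j ⟨X, hX, rfl⟩
    exact ncard_le_two m X hX
  unfold muOuter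
  exact le_antisymm (csSup_le ⟨2, h2⟩ hub) (le_csSup ⟨2, hub⟩ h2)

lemma muOuter_c3 : muOuter (cycleGraph 3) = 3 := by
  have huniv : IsOuterMVSet (cycleGraph 3) Set.univ := by
    constructor
    · intro u _ v _
      rcases eq_or_ne u v with rfl | hne
      · exact ⟨SimpleGraph.Walk.nil, SimpleGraph.Walk.IsPath.nil,
          by simp [SimpleGraph.dist_self], by simp⟩
      · have hadj : (cycleGraph 3).Adj u v := by
          rw [cycleGraph_three_eq_top]; exact hne
        refine ⟨SimpleGraph.Walk.cons hadj SimpleGraph.Walk.nil, ?_, ?_, ?_⟩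
        · rw [SimpleGraph.Walk.isPath_def]
          simp [hne]
        · rw [SimpleGraph.Walk.length_cons, SimpleGraph.Walk.length_nil,
            (SimpleGraph.dist_eq_one_iff_adj).mpr hadj]
        · intro w hw _
          simpa using hw
    · intro u _ v hv
      exact absurd (Set.mem_univ v) hv
  have h3 : 3 ∈ {k | ∃ X : Set (Fin 3), IsOuterMVSet (cycleGraph 3) X ∧ X.ncard = k} := by
    refine ⟨Set.univ, huniv, ?_⟩
    simp [Set.ncard_univ, Nat.card_eq_fintype_card]
  have hub : ∀ j ∈ {k | ∃ X : Set (Fin 3), IsOuterMVSet (cycleGraph 3) X ∧ X.ncard = k},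
      j ≤ 3 := by
    rintro j ⟨X, hX, rfl⟩
    calc X.ncard ≤ (Set.univ : Set (Fin 3)).ncard :=
          Set.ncard_le_ncard (Set.subset_univ X) Set.finite_univ
      _ = 3 := by simp [Set.ncard_univ, Nat.card_eq_fintype_card]
  unfold muOuter
  exact le_antisymm (csSup_le ⟨3, h3⟩ hub) (le_csSup ⟨3, hub⟩ h3)


end CycleAux

theorem muOuter_cycleGraph :
    muOuter (cycleGraph 3) = 3 ∧ ∀ n : ℕ, 4 ≤ n → muOuter (cycleGraph n) = 2 := by
  refine ⟨CycleAux.muOuter_c3, ?_⟩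
  intro n hn
  obtain ⟨m, rfl⟩ : ∃ m, n = m + 4 := ⟨n - 4, by omega⟩
  exact CycleAux.muOuter_cn m
end

section
/- Let G be a finite simple connected graph. If V(G) = V_1 ∪ ⋯ ∪ V_k where, for each i ∈ {1,…,k}, the induced subgraph G[V_i] is a convex subgraph of G and μ_d(G[V_i]) = 0, then μ_d(G) = 0. -/
open SimpleGraph

/-- A set of vertices `S` is convex in `G` if every shortest path between two
vertices of `S` lies entirely within `S`. -/
def IsConvexSet {V : Type*} (G : SimpleGraph V) (S : Set V) : Prop :=
  ∀ u ∈ S, ∀ v ∈ S, ∀ p : G.Walk u v, p.IsPath → p.length = G.dist u v →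
    ∀ w ∈ p.support, w ∈ S


section Aux

variable {V : Type*} {G : SimpleGraph V} {S : Set V}

/-- The inclusion homomorphism from an induced subgraph. -/
def inclHom (G : SimpleGraph V) (S : Set V) : G.induce S →g G :=
  ⟨Subtype.val, fun h => h⟩

lemma inclHom_injective : Function.Injective (inclHom G S) :=
  Subtype.val_injective

/-- Lift a walk whose support lies in `S` to the induced subgraph. -/
lemma exists_lift_walk : ∀ {u v : V} (p : G.Walk u v)
    (h : ∀ w ∈ p.support, w ∈ S),
    ∃ q : (G.induce S).Walk ⟨u, h u p.start_mem_support⟩ ⟨v, h v p.end_mem_support⟩,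
      q.length = p.length ∧ ∀ w ∈ q.support, (w : V) ∈ p.support := by
  intro u v p
  induction p with
  | nil =>
    intro h
    exact ⟨SimpleGraph.Walk.nil, rfl, by simp⟩
  | @cons a b c hab p ih =>
    intro h
    have hb : ∀ w ∈ p.support, w ∈ S := fun w hw => h w (by simp [hw])
    obtain ⟨q, hq1, hq2⟩ := ih hb
    refine ⟨SimpleGraph.Walk.cons (by exact hab :
      (G.induce S).Adj ⟨a, h a (SimpleGraph.Walk.start_mem_support _)⟩
        ⟨b, hb b p.start_mem_support⟩) q, by exact congrArg (· + 1) hq1, ?_⟩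
    intro w hw
    rcases (SimpleGraph.Walk.mem_support_iff _).mp hw with h1 | h1
    · simp [h1]
    · simp [hq2 w h1]

/-- Distance in a convex induced subgraph agrees with the ambient distance. -/
lemma dist_induce_eq (hG : G.Connected) (hconv : IsConvexSet G S)
    (u v : S) : (G.induce S).dist u v = G.dist (u : V) (v : V) := by
  obtain ⟨p, hp, hpl⟩ := hG.exists_path_of_dist (u : V) (v : V)
  have hsupp : ∀ w ∈ p.support, w ∈ S := hconv _ u.2 _ v.2 p hp hpl
  obtain ⟨q, hq1, _⟩ := exists_lift_walk p hsupp
  refine le_antisymm ?_ ?_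
  · have h := SimpleGraph.dist_le q
    rw [hq1, hpl] at h
    exact h
  · have hreach : (G.induce S).Reachable u v := ⟨q⟩
    obtain ⟨r, hr⟩ := hreach.exists_walk_length_eq_dist
    calc G.dist (u : V) (v : V) ≤ (r.map (inclHom G S)).length :=
          SimpleGraph.dist_le _
      _ = (G.induce S).dist u v := by rw [SimpleGraph.Walk.length_map, hr]

/-- Any dual mutual-visibility set restricts to one on a convex induced subgraph. -/
lemma isDualMVSet_restrict (hG : G.Connected) (hconv : IsConvexSet G S)
    {X : Set V} (hX : IsDualMVSet G X) :
    IsDualMVSet (G.induce S) {w : S | (w : V) ∈ X} := by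
  have key : ∀ u v : S, XVisible G X (u : V) (v : V) →
      XVisible (G.induce S) {w : S | (w : V) ∈ X} u v := by
    intro u v ⟨p, hp, hpl, hpX⟩
    have hsupp : ∀ w ∈ p.support, w ∈ S := hconv _ u.2 _ v.2 p hp hpl
    obtain ⟨q, hq1, hq2⟩ := exists_lift_walk p hsupp
    have hdist : q.length = (G.induce S).dist u v := by
      rw [hq1, hpl]
      exact (dist_induce_eq hG hconv u v).symm
    refine ⟨q, q.isPath_of_length_eq_dist hdist, hdist, ?_⟩
    intro w hw hwX
    rcases hpX (w : V) (hq2 w hw) hwX with h1 | h1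
    · exact Or.inl (Subtype.ext h1)
    · exact Or.inr (Subtype.ext h1)
  constructor
  · intro u hu v hv
    exact key u v (hX.1 _ hu _ hv)
  · intro u hu v hv
    exact key u v (hX.2 _ hu _ hv)

end Aux

/-- In a connected graph, the empty set is a dual mutual-visibility set. -/
lemma isDualMVSet_empty {V : Type*} {G : SimpleGraph V} (hG : G.Connected) :
    IsDualMVSet G (∅ : Set V) := by
  constructor
  · intro u hu; exact absurd hu (by simp)
  · intro u _ v _
    obtain ⟨p, hp, hpl⟩ := hG.exists_path_of_dist u v
    exact ⟨p, hp, hpl, fun w _ hw => absurd hw (by simp)⟩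

theorem muDual_eq_zero_of_cover_by_convex {V : Type*} [Fintype V] (G : SimpleGraph V)
    (hG : G.Connected) (k : ℕ) (Vs : Fin k → Set V)
    (hcover : (⋃ i, Vs i) = Set.univ)
    (hconv : ∀ i, IsConvexSet G (Vs i))
    (hzero : ∀ i, muDual (G.induce (Vs i)) = 0) :
    muDual G = 0 := by
  classical
  -- Every dual MV set of G is empty
  have hempty : ∀ X : Set V, IsDualMVSet G X → X = ∅ := by
    intro X hX
    by_contra hne
    obtain ⟨x, hx⟩ := Set.nonempty_iff_ne_empty.mpr hne
    have hxU : x ∈ ⋃ i, Vs i := hcover ▸ Set.mem_univ x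
    obtain ⟨i, hxi⟩ := Set.mem_iUnion.mp hxU
    have hY : IsDualMVSet (G.induce (Vs i)) {w : Vs i | (w : V) ∈ X} :=
      isDualMVSet_restrict hG (hconv i) hX
    set Y : Set (Vs i) := {w : Vs i | (w : V) ∈ X} with hYdef
    have hYne : Y.Nonempty := ⟨⟨x, hxi⟩, hx⟩
    have hYpos : 0 < Y.ncard := (Set.ncard_pos (Set.toFinite Y)).mpr hYne
    have hmem : Y.ncard ∈ {k | ∃ X : Set (Vs i), IsDualMVSet (G.induce (Vs i)) X ∧ X.ncard = k} :=
      ⟨Y, hY, rfl⟩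
    have hbdd : BddAbove {k | ∃ X : Set (Vs i), IsDualMVSet (G.induce (Vs i)) X ∧ X.ncard = k} := by
      refine ⟨Nat.card (Vs i), ?_⟩
      rintro k ⟨Z, _, rfl⟩
      have := Set.ncard_le_ncard (Set.subset_univ Z) Set.finite_univ
      simpa [Set.ncard_univ] using this
    have := le_csSup hbdd hmem
    rw [show sSup {k | ∃ X : Set (Vs i), IsDualMVSet (G.induce (Vs i)) X ∧ X.ncard = k} = 0
        from hzero i] at this
    omega
  have hset : {k | ∃ X : Set V, IsDualMVSet G X ∧ X.ncard = k} = {0} := by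
    ext n
    constructor
    · rintro ⟨X, hX, rfl⟩
      simp [hempty X hX]
    · rintro rfl
      exact ⟨∅, isDualMVSet_empty hG, by simp⟩
  rw [muDual, hset, csSup_singleton]
end

section
/- For all integers n ≥ m ≥ 3, the outer mutual-visibility number of the torus satisfies μ_o(C_n □ C_m) ≤ 2m. -/
open SimpleGraph

open Fin.CommRing

section FinHelpers
variable {n : ℕ}

private lemma fin_neg_val [NeZero n] (z : Fin n) :
    (z.val = 0 ∧ (-z).val = 0) ∨ (0 < z.val ∧ z.val + (-z).val = n) := by
  have hz := z.isLt
  rw [Fin.neg_def]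
  rcases Nat.eq_zero_or_pos z.val with h | h
  · left; simp [h]
  · right
    refine ⟨h, ?_⟩
    simp only [Fin.val_mk]
    rw [Nat.mod_eq_of_lt (by omega)]
    omega

private lemma fin_add_val [NeZero n] (z w : Fin n) :
    z.val + w.val = (z + w).val ∨ z.val + w.val = (z + w).val + n := by
  have := z.isLt; have := w.isLt
  rw [Fin.val_add_eq_ite]
  split_ifs <;> omega

private lemma fin_sub_val [NeZero n] (z w : Fin n) :
    (z - w).val + w.val = z.val ∨ (z - w).val + w.val = z.val + n := by
  have h1 : z - w + w = z := by ring
  rcases fin_add_val (z - w) w with h | h <;> rw [h1] at h <;> omega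

end FinHelpers

private def cdist {n : ℕ} (a b : Fin n) : ℕ := min (b - a).val (a - b).val

section CdistLemmas
variable {n : ℕ}

private lemma cdist_self [NeZero n] (a : Fin n) : cdist a a = 0 := by
  simp [cdist, sub_self, Fin.val_zero]

private lemma cdist_adj_le [NeZero n] {a a' : Fin n} (t : Fin n)
    (h : (cycleGraph n).Adj a a') : cdist a t ≤ cdist a' t + 1 := by
  rw [cycleGraph_adj'] at h
  have e1 : t - a = (t - a') - (a - a') := by ring
  have e2 : a - t = -(t - a) := by ring
  have e3 : a' - t = -(t - a') := by ring
  have h4 := fin_neg_val (t - a)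
  have h5 := fin_neg_val (t - a')
  rcases h with h | h
  · -- (a - a').val = 1
    have h6 := fin_sub_val (t - a') (a - a')
    rw [← e1] at h6
    unfold cdist
    rw [e2, e3] at *
    omega
  · -- (a' - a).val = 1 ; t - a = (t - a') + (a' - a)
    have e1' : t - a = (t - a') + (a' - a) := by ring
    have h6 := fin_add_val (t - a') (a' - a)
    rw [← e1'] at h6
    unfold cdist
    rw [e2, e3] at *
    omega

private lemma cdist_add_natCast [NeZero n] (a : Fin n) (t : ℕ) (ht : t < n) :
    cdist a (a + (t : Fin n)) = min t (n - t) := by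
  have h1 : (a + (t : Fin n)) - a = (t : Fin n) := by ring
  have h2 : a - (a + (t : Fin n)) = -(t : Fin n) := by ring
  have hv : ((t : Fin n)).val = t := by
    rw [Fin.val_natCast]; exact Nat.mod_eq_of_lt ht
  unfold cdist
  rw [h1, h2]
  rcases fin_neg_val (t : Fin n) with ⟨h3, h4⟩ | ⟨h3, h4⟩ <;> omega

private lemma cdist_sub_natCast [NeZero n] (a : Fin n) (t : ℕ) (ht : t < n) :
    cdist a (a - (t : Fin n)) = min t (n - t) := by
  have h1 : (a - (t : Fin n)) - a = -(t : Fin n) := by ring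
  have h2 : a - (a - (t : Fin n)) = (t : Fin n) := by ring
  have hv : ((t : Fin n)).val = t := by
    rw [Fin.val_natCast]; exact Nat.mod_eq_of_lt ht
  unfold cdist
  rw [h1, h2]
  rcases fin_neg_val (t : Fin n) with ⟨h3, h4⟩ | ⟨h3, h4⟩ <;> omega

private lemma cdist_eq_one_of_adj [NeZero n] (h3 : 3 ≤ n) {a b : Fin n}
    (h : (cycleGraph n).Adj a b) : cdist a b = 1 := by
  rw [cycleGraph_adj'] at h
  have e : a - b = -(b - a) := by ring
  have h4 := fin_neg_val (b - a)
  unfold cdist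
  rw [e]
  rw [e] at h
  omega

private lemma adj_add_one [NeZero n] (h3 : 3 ≤ n) (a : Fin n) :
    (cycleGraph n).Adj a (a + 1) := by
  rw [cycleGraph_adj']
  right
  have : a + 1 - a = 1 := by ring
  rw [this, Fin.val_one', Nat.mod_eq_of_lt (by omega)]

private lemma eq_add_one_of_sub_val [NeZero n] {a a' : Fin n} (h3 : 3 ≤ n)
    (h : (a' - a).val = 1) : a' = a + 1 := by
  have h1 : a' - a = 1 := by
    apply Fin.ext
    rw [h, Fin.val_one', Nat.mod_eq_of_lt (by omega)]
  have h2 := sub_eq_iff_eq_add.mp h1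
  rw [h2]; ring

end CdistLemmas

section TorusLemmas
variable {n m : ℕ} [NeZero n] [NeZero m]

private lemma tdist_le_length {u v : Fin n × Fin m}
    (p : (cycleGraph n □ cycleGraph m).Walk u v) :
    cdist u.1 v.1 + cdist u.2 v.2 ≤ p.length := by
  induction p with
  | nil => simp [cdist_self]
  | @cons x y z h q ih =>
    rw [Walk.length_cons]
    rcases (boxProd_adj).1 h with ⟨h1, h2⟩ | ⟨h1, h2⟩
    · have hle := cdist_adj_le (t := z.1) h1
      rw [h2]
      omega
    · have hle := cdist_adj_le (t := z.2) h1
      rw [h2]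
      omega

private lemma horiz_walk (h3 : 3 ≤ n) (b : Fin m) :
    ∀ (t : ℕ) (a : Fin n), ∃ p : (cycleGraph n □ cycleGraph m).Walk (a, b) (a + (t : Fin n), b),
      p.length = t := by
  intro t
  induction t with
  | zero =>
    intro a
    refine ⟨Walk.nil.copy rfl ?_, by simp⟩
    simp
  | succ t ih =>
    intro a
    obtain ⟨q, hq⟩ := ih (a + 1)
    have e : (cycleGraph n □ cycleGraph m).Adj (a, b) (a + 1, b) := by
      rw [boxProd_adj]; left; exact ⟨adj_add_one h3 a, rfl⟩
    have hcast : ((a + 1) + ((t : ℕ) : Fin n), b) = (a + ((t + 1 : ℕ) : Fin n), b) := by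
      have : (((t + 1 : ℕ)) : Fin n) = ((t : ℕ) : Fin n) + 1 := by push_cast; ring
      rw [this]; ring_nf
    refine ⟨(Walk.cons e q).copy rfl hcast, ?_⟩
    simp [hq]

private lemma dist_horiz_le (h3 : 3 ≤ n) (a : Fin n) (b : Fin m) (t : ℕ) :
    (cycleGraph n □ cycleGraph m).dist (a, b) (a + (t : Fin n), b) ≤ t := by
  obtain ⟨p, hp⟩ := horiz_walk h3 b t a
  calc (cycleGraph n □ cycleGraph m).dist (a, b) (a + (t : Fin n), b) ≤ p.length :=
        dist_le p
    _ = t := hp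

end TorusLemmas

set_option linter.unusedSectionVars false

section ArcLemmas
variable {n m : ℕ} [NeZero n] [NeZero m]

private lemma arc_support_aux (h3 : 3 ≤ n) (hm3 : 3 ≤ m) :
    ∀ (t : ℕ), 2 * t < n → ∀ (a : Fin n) (b : Fin m) (u : Fin n × Fin m),
      u = (a + (t : Fin n), b) → ∀ p : (cycleGraph n □ cycleGraph m).Walk (a, b) u,
      p.length ≤ t →
      ∀ s : ℕ, s ≤ t → ((a + (s : Fin n), b) : Fin n × Fin m) ∈ p.support := by
  intro t
  induction t with
  | zero =>
    intro _ a b u hu p _ s hs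
    interval_cases s
    simpa using p.start_mem_support
  | succ t ih =>
    intro h2t a b u hu p hp s hs
    cases p with
    | nil =>
      exfalso
      have h1 : a = a + (((t + 1 : ℕ)) : Fin n) := congrArg Prod.fst hu
      have h2 : (((t + 1 : ℕ)) : Fin n) = 0 := by
        have := add_eq_left.mp h1.symm
        exact this
      have h4 : (t + 1) % n = 0 := by
        have := congrArg Fin.val h2
        rwa [Fin.val_natCast, Fin.val_zero] at this
      rw [Nat.mod_eq_of_lt (by omega)] at h4
      omega
    | @cons _ w _ h q =>
      subst hu
      obtain ⟨a', b'⟩ := w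
      rcases (boxProd_adj).1 h with ⟨h1, h2⟩ | ⟨h1, h2⟩
      · -- horizontal step
        simp only at h1 h2
        subst h2
        rcases (cycleGraph_adj').1 h1 with hL | hR
        · -- a = a' + 1, i.e. step backwards: contradiction via distance
          exfalso
          have ha : a = a' + 1 := eq_add_one_of_sub_val h3 hL
          have ha' : a' = a - 1 := by rw [ha]; ring
          subst ha'
          have hlow := tdist_le_length q
          simp only [cdist_self] at hlow
          have hrw : a + (((t + 1 : ℕ)) : Fin n) = (a - 1) + (((t + 2 : ℕ)) : Fin n) := by
            push_cast
            ring
          have heq : cdist (a - 1) (a + (((t + 1 : ℕ)) : Fin n))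
              = cdist (a - 1) ((a - 1) + (((t + 2 : ℕ)) : Fin n)) := congrArg _ hrw
          rw [cdist_add_natCast _ (t + 2) (by omega)] at heq
          rw [heq] at hlow
          have hq : q.length ≤ t := by
            have := hp
            rw [Walk.length_cons] at this
            omega
          omega
        · -- forward step a' = a + 1
          have ha : a' = a + 1 := eq_add_one_of_sub_val h3 hR
          subst ha
          have hrw : ((a + (((t + 1 : ℕ)) : Fin n), b) : Fin n × Fin m)
              = ((a + 1) + ((t : ℕ) : Fin n), b) := by
            rw [Prod.mk.injEq]
            refine ⟨?_, rfl⟩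
            push_cast
            ring
          have hq : (q.copy rfl hrw).length ≤ t := by
            rw [Walk.length_copy]
            have := hp
            rw [Walk.length_cons] at this
            omega
          have hsup := ih (by omega) (a + 1) b _ rfl (q.copy rfl hrw) hq
          rw [Walk.support_cons]
          cases s with
          | zero => simp
          | succ s' =>
            refine List.mem_cons_of_mem _ ?_
            have := hsup s' (by omega)
            rw [Walk.support_copy] at this
            have hrw2 : (a + 1) + ((s' : ℕ) : Fin n) = a + (((s' + 1 : ℕ)) : Fin n) := by
              push_cast
              ring
            rwa [hrw2] at this
      · -- vertical step : contradiction
        exfalso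
        simp only at h1 h2
        subst h2
        have hlow := tdist_le_length q
        simp only at hlow
        rw [cdist_add_natCast _ (t + 1) (by omega)] at hlow
        rw [cdist_eq_one_of_adj hm3 h1.symm] at hlow
        have hq : q.length ≤ t := by
          have := hp
          rw [Walk.length_cons] at this
          omega
        omega

private lemma arc_support (h3 : 3 ≤ n) (hm3 : 3 ≤ m) (t : ℕ) (h2t : 2 * t < n)
    (a : Fin n) (b : Fin m)
    (p : (cycleGraph n □ cycleGraph m).Walk (a, b) (a + (t : Fin n), b))
    (hp : p.length ≤ t) (s : ℕ) (hs : s ≤ t) :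
    ((a + (s : Fin n), b) : Fin n × Fin m) ∈ p.support :=
  arc_support_aux h3 hm3 t h2t a b _ rfl p hp s hs

private lemma arc_support_aux' (h3 : 3 ≤ n) (hm3 : 3 ≤ m) :
    ∀ (t : ℕ), 2 * t < n → ∀ (a : Fin n) (b : Fin m) (u : Fin n × Fin m),
      u = (a - (t : Fin n), b) → ∀ p : (cycleGraph n □ cycleGraph m).Walk (a, b) u,
      p.length ≤ t →
      ∀ s : ℕ, s ≤ t → ((a - (s : Fin n), b) : Fin n × Fin m) ∈ p.support := by
  intro t
  induction t with
  | zero =>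
    intro _ a b u hu p _ s hs
    interval_cases s
    simpa using p.start_mem_support
  | succ t ih =>
    intro h2t a b u hu p hp s hs
    cases p with
    | nil =>
      exfalso
      have h1 : a = a - (((t + 1 : ℕ)) : Fin n) := congrArg Prod.fst hu
      have h2 : (((t + 1 : ℕ)) : Fin n) = 0 := sub_eq_self.mp h1.symm
      have h4 : (t + 1) % n = 0 := by
        have := congrArg Fin.val h2
        rwa [Fin.val_natCast, Fin.val_zero] at this
      rw [Nat.mod_eq_of_lt (by omega)] at h4
      omega
    | @cons _ w _ h q =>
      subst hu
      obtain ⟨a', b'⟩ := w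
      rcases (boxProd_adj).1 h with ⟨h1, h2⟩ | ⟨h1, h2⟩
      · -- horizontal step
        simp only at h1 h2
        subst h2
        rcases (cycleGraph_adj').1 h1 with hL | hR
        · -- backward step a' = a - 1 : recursive case
          have ha : a = a' + 1 := eq_add_one_of_sub_val h3 hL
          have ha' : a' = a - 1 := by rw [ha]; ring
          subst ha'
          have hrw : ((a - (((t + 1 : ℕ)) : Fin n), b) : Fin n × Fin m)
              = ((a - 1) - ((t : ℕ) : Fin n), b) := by
            rw [Prod.mk.injEq]
            refine ⟨?_, rfl⟩
            push_cast
            ring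
          have hq : (q.copy rfl hrw).length ≤ t := by
            rw [Walk.length_copy]
            have := hp
            rw [Walk.length_cons] at this
            omega
          have hsup := ih (by omega) (a - 1) b _ rfl (q.copy rfl hrw) hq
          rw [Walk.support_cons]
          cases s with
          | zero => simp
          | succ s' =>
            refine List.mem_cons_of_mem _ ?_
            have := hsup s' (by omega)
            rw [Walk.support_copy] at this
            have hrw2 : (a - 1) - ((s' : ℕ) : Fin n) = a - (((s' + 1 : ℕ)) : Fin n) := by
              push_cast
              ring
            rwa [hrw2] at this
        · -- forward step a' = a + 1 : contradiction via distance
          exfalso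
          have ha : a' = a + 1 := eq_add_one_of_sub_val h3 hR
          subst ha
          have hlow := tdist_le_length q
          simp only [cdist_self] at hlow
          have hrw : a - (((t + 1 : ℕ)) : Fin n) = (a + 1) - (((t + 2 : ℕ)) : Fin n) := by
            push_cast
            ring
          have heq : cdist (a + 1) (a - (((t + 1 : ℕ)) : Fin n))
              = cdist (a + 1) ((a + 1) - (((t + 2 : ℕ)) : Fin n)) := congrArg _ hrw
          rw [cdist_sub_natCast _ (t + 2) (by omega)] at heq
          rw [heq] at hlow
          have hq : q.length ≤ t := by
            have := hp
            rw [Walk.length_cons] at this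
            omega
          omega
      · -- vertical step : contradiction
        exfalso
        simp only at h1 h2
        subst h2
        have hlow := tdist_le_length q
        simp only at hlow
        rw [cdist_sub_natCast _ (t + 1) (by omega)] at hlow
        rw [cdist_eq_one_of_adj hm3 h1.symm] at hlow
        have hq : q.length ≤ t := by
          have := hp
          rw [Walk.length_cons] at this
          omega
        omega

private lemma arc_support' (h3 : 3 ≤ n) (hm3 : 3 ≤ m) (t : ℕ) (h2t : 2 * t < n)
    (a : Fin n) (b : Fin m)
    (p : (cycleGraph n □ cycleGraph m).Walk (a, b) (a - (t : Fin n), b))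
    (hp : p.length ≤ t) (s : ℕ) (hs : s ≤ t) :
    ((a - (s : Fin n), b) : Fin n × Fin m) ∈ p.support :=
  arc_support_aux' h3 hm3 t h2t a b _ rfl p hp s hs

end ArcLemmas



private lemma visible_of_outer {V : Type*} {G : SimpleGraph V} {X : Set V}
    (hX : IsOuterMVSet G X) {u : V} (hu : u ∈ X) (v : V) : XVisible G X u v := by
  by_cases hv : v ∈ X
  · exact hX.1 u hu v hv
  · exact hX.2 u hu v hv

section MainLemmas
variable {n m : ℕ} [NeZero n] [NeZero m]

private lemma natCast_fin_inj {i j : ℕ} (hi : i < n) (hj : j < n)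
    (h : (i : Fin n) = (j : Fin n)) : i = j := by
  have := congrArg Fin.val h
  rwa [Fin.val_natCast, Fin.val_natCast, Nat.mod_eq_of_lt hi, Nat.mod_eq_of_lt hj] at this

private lemma natCast_fin_ne_zero {i : ℕ} (hi0 : 0 < i) (hi : i < n) :
    (i : Fin n) ≠ 0 := by
  intro h
  have := congrArg Fin.val h
  rw [Fin.val_natCast, Fin.val_zero, Nat.mod_eq_of_lt hi] at this
  omega

private lemma lemA (h3 : 3 ≤ n) (hm3 : 3 ≤ m) {X : Set (Fin n × Fin m)}
    (hX : IsOuterMVSet (cycleGraph n □ cycleGraph m) X) {a : Fin n} {b : Fin m} {s t : ℕ}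
    (hx : (a, b) ∈ X) (hy : (a + (s : Fin n), b) ∈ X)
    (h0 : 0 < s) (hst : s < t) (htn : 2 * t < n) : False := by
  obtain ⟨p, hpath, hlen, hsup⟩ := visible_of_outer hX hx ((a + (t : Fin n), b))
  have hple : p.length ≤ t := by
    rw [hlen]; exact dist_horiz_le h3 a b t
  have hmem := arc_support h3 hm3 t htn a b p hple s (le_of_lt hst)
  rcases hsup _ hmem hy with h | h
  · have h1 : (s : Fin n) = 0 := add_eq_left.mp (congrArg Prod.fst h)
    exact natCast_fin_ne_zero h0 (by omega) h1
  · have h1 : (s : Fin n) = (t : Fin n) := add_left_cancel (congrArg Prod.fst h)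
    have := natCast_fin_inj (by omega) (by omega) h1
    omega

private lemma pair_spacing (h3 : 3 ≤ n) (hm3 : 3 ≤ m) {X : Set (Fin n × Fin m)}
    (hX : IsOuterMVSet (cycleGraph n □ cycleGraph m) X) {x y : Fin n} {b : Fin m}
    (hx : (x, b) ∈ X) (hy : (y, b) ∈ X) (hne : x ≠ y) : n ≤ 2 * (y - x).val + 2 := by
  by_contra hcon
  push_neg at hcon
  have h0 : 0 < (y - x).val := by
    rcases Nat.eq_zero_or_pos (y - x).val with h | h
    · exfalso
      apply hne
      have hz : y - x = 0 := by
        apply Fin.ext; rw [h, Fin.val_zero]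
      exact (sub_eq_zero.mp hz).symm
    · exact h
  have hy' : (x + (((y - x).val : ℕ) : Fin n), b) ∈ X := by
    have : x + (((y - x).val : ℕ) : Fin n) = y := by
      rw [Fin.cast_val_eq_self]; ring
    rwa [this]
  exact lemA h3 hm3 hX hx hy' h0 (Nat.lt_succ_self _) (by omega)

private lemma lemB (h3 : 3 ≤ n) (hm3 : 3 ≤ m) {X : Set (Fin n × Fin m)}
    (hX : IsOuterMVSet (cycleGraph n □ cycleGraph m) X) {a : Fin n} {b : Fin m} {k s r : ℕ}
    (hn : n = 2 * k) (hs0 : 0 < s) (hsk : s < k) (hkr : k < r) (hrn : r < n)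
    (hx : (a, b) ∈ X) (hy1 : (a + (s : Fin n), b) ∈ X) (hy2 : (a + (r : Fin n), b) ∈ X) :
    False := by
  obtain ⟨p, hpath, hlen, hsup⟩ := visible_of_outer hX hx ((a + (k : Fin n), b))
  have hple : p.length ≤ k := by
    rw [hlen]; exact dist_horiz_le h3 a b k
  clear hlen hpath
  -- generalize the endpoint so we can case on p
  generalize hgen : ((a + (k : Fin n), b) : Fin n × Fin m) = u at p hsup
  cases p with
  | nil =>
    have h1 : (k : Fin n) = 0 := add_eq_left.mp (congrArg Prod.fst hgen)
    exact natCast_fin_ne_zero (by omega) (by omega) h1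
  | @cons _ w _ h q =>
    subst hgen
    obtain ⟨a', b'⟩ := w
    rcases (boxProd_adj).1 h with ⟨h1, h2⟩ | ⟨h1, h2⟩
    · -- horizontal first step
      simp only at h1 h2
      subst h2
      rcases (cycleGraph_adj').1 h1 with hL | hR
      · -- first step backwards : a' = a - 1, walk along the other arc, hits y2
        have ha : a = a' + 1 := eq_add_one_of_sub_val h3 hL
        have ha' : a' = a - 1 := by rw [ha]; ring
        subst ha'
        have hkk : ((k : ℕ) : Fin n) + ((k : ℕ) : Fin n) = 0 := by
          rw [← Nat.cast_add]
          have : k + k = n := by omega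
          rw [this, Fin.natCast_self]
        have hrw : ((a + ((k : ℕ) : Fin n), b) : Fin n × Fin m)
            = ((a - 1) - (((k - 1 : ℕ)) : Fin n), b) := by
          rw [Prod.mk.injEq]
          refine ⟨?_, rfl⟩
          rw [Nat.cast_sub (by omega), Nat.cast_one]
          have : a + ((k : ℕ) : Fin n) = a - ((k : ℕ) : Fin n) := by
            calc a + ((k : ℕ) : Fin n)
                = a - ((k : ℕ) : Fin n) + (((k : ℕ) : Fin n) + ((k : ℕ) : Fin n)) := by ring
              _ = a - ((k : ℕ) : Fin n) := by rw [hkk]; ring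
          rw [this]; ring
        have hq : (q.copy rfl hrw).length ≤ k - 1 := by
          rw [Walk.length_copy]
          have := hple
          rw [Walk.length_cons] at this
          omega
        have hmem := arc_support' h3 hm3 (k - 1) (by omega) (a - 1) b (q.copy rfl hrw) hq
          (n - r - 1) (by omega)
        rw [Walk.support_copy] at hmem
        have e1 : (a - 1) - (((n - r - 1 : ℕ)) : Fin n) = a + ((r : ℕ) : Fin n) := by
          have e2 : ((n - r - 1 : ℕ) : Fin n) = -((r : ℕ) : Fin n) - 1 := by
            rw [show n - r - 1 = n - (r + 1) by omega, Nat.cast_sub (by omega),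
              Fin.natCast_self, Nat.cast_add, Nat.cast_one]
            ring
          rw [e2]; ring
        rw [e1] at hmem
        have hmem' : ((a + ((r : ℕ) : Fin n), b) : Fin n × Fin m) ∈ (Walk.cons h q).support :=
          List.mem_cons_of_mem _ hmem
        rcases hsup _ hmem' hy2 with hcase | hcase
        · exact natCast_fin_ne_zero (by omega) hrn
            (add_eq_left.mp (congrArg Prod.fst hcase))
        · have h1 : (r : Fin n) = (k : Fin n) := add_left_cancel (congrArg Prod.fst hcase)
          have := natCast_fin_inj hrn (by omega) h1
          omega
      · -- first step forwards : a' = a + 1, walk along the short arc, hits y1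
        have ha : a' = a + 1 := eq_add_one_of_sub_val h3 hR
        subst ha
        obtain ⟨s', rfl⟩ : ∃ s', s = s' + 1 := ⟨s - 1, by omega⟩
        have hrw : ((a + ((k : ℕ) : Fin n), b) : Fin n × Fin m)
            = ((a + 1) + (((k - 1 : ℕ)) : Fin n), b) := by
          rw [Prod.mk.injEq]
          refine ⟨?_, rfl⟩
          rw [Nat.cast_sub (by omega), Nat.cast_one]
          ring
        have hq : (q.copy rfl hrw).length ≤ k - 1 := by
          rw [Walk.length_copy]
          have := hple
          rw [Walk.length_cons] at this
          omega
        have hmem := arc_support h3 hm3 (k - 1) (by omega) (a + 1) b (q.copy rfl hrw) hq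
          s' (by omega)
        rw [Walk.support_copy] at hmem
        have e1 : (a + 1) + ((s' : ℕ) : Fin n) = a + (((s' + 1 : ℕ)) : Fin n) := by
          push_cast; ring
        rw [e1] at hmem
        have hmem' : ((a + (((s' + 1 : ℕ)) : Fin n), b) : Fin n × Fin m)
            ∈ (Walk.cons h q).support := List.mem_cons_of_mem _ hmem
        rcases hsup _ hmem' hy1 with hcase | hcase
        · exact natCast_fin_ne_zero (by omega) (by omega)
            (add_eq_left.mp (congrArg Prod.fst hcase))
        · have h1 : ((s' + 1 : ℕ) : Fin n) = (k : Fin n) :=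
            add_left_cancel (congrArg Prod.fst hcase)
          have := natCast_fin_inj (by omega) (by omega) h1
          omega
    · -- vertical first step : contradiction
      simp only at h1 h2
      subst h2
      have hlow := tdist_le_length q
      simp only at hlow
      rw [cdist_add_natCast _ k (by omega)] at hlow
      rw [cdist_eq_one_of_adj hm3 h1.symm] at hlow
      have := hple
      rw [Walk.length_cons] at this
      omega

end MainLemmas

private lemma hex4 : ∀ u w : Fin 4, u ≠ 0 → w ≠ 0 → u ≠ w → ∃ c : Fin 4,
    (c = 0 ∨ c = u ∨ c = w) ∧ (c + 1 = 0 ∨ c + 1 = u ∨ c + 1 = w) ∧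
    (c + 3 = 0 ∨ c + 3 = u ∨ c + 3 = w) := by decide

private lemma hex6 : ∀ u w : Fin 6, u ≠ 0 → w ≠ 0 → u ≠ w →
    6 ≤ 2 * u.val + 2 → 6 ≤ 2 * (-u).val + 2 →
    6 ≤ 2 * w.val + 2 → 6 ≤ 2 * (-w).val + 2 →
    6 ≤ 2 * (w - u).val + 2 → 6 ≤ 2 * (-(w - u)).val + 2 →
    ∃ c : Fin 6,
    (c = 0 ∨ c = u ∨ c = w) ∧ (c + 2 = 0 ∨ c + 2 = u ∨ c + 2 = w) ∧
    (c + 4 = 0 ∨ c + 4 = u ∨ c + 4 = w) := by decide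

section Row3
variable {n m : ℕ} [NeZero n] [NeZero m]

private lemma row3 (h4 : 4 ≤ n) (hm3 : 3 ≤ m) {X : Set (Fin n × Fin m)}
    (hX : IsOuterMVSet (cycleGraph n □ cycleGraph m) X) {b : Fin m} {a1 a2 a3 : Fin n}
    (h12 : a1 ≠ a2) (h13 : a1 ≠ a3) (h23 : a2 ≠ a3)
    (mm1 : (a1, b) ∈ X) (mm2 : (a2, b) ∈ X) (mm3 : (a3, b) ∈ X) : False := by
  have h3 : 3 ≤ n := by omega
  have c12 := pair_spacing h3 hm3 hX mm1 mm2 h12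
  have c21 := pair_spacing h3 hm3 hX mm2 mm1 h12.symm
  have c13 := pair_spacing h3 hm3 hX mm1 mm3 h13
  have c31 := pair_spacing h3 hm3 hX mm3 mm1 h13.symm
  have c23 := pair_spacing h3 hm3 hX mm2 mm3 h23
  have c32 := pair_spacing h3 hm3 hX mm3 mm2 h23.symm
  set u := a2 - a1 with hu
  set w := a3 - a1 with hw
  set d := a3 - a2 with hd
  have e21 : a1 - a2 = -u := by rw [hu]; ring
  have e31 : a1 - a3 = -w := by rw [hw]; ring
  have e32 : a2 - a3 = -d := by rw [hd]; ring
  rw [e21] at c21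
  rw [e31] at c31
  rw [e32] at c32
  have hdwu : d = w - u := by rw [hd, hw, hu]; ring
  have hnu := fin_neg_val u
  have hnw := fin_neg_val w
  have hnd := fin_neg_val d
  have hsub := fin_sub_val w u
  rw [← hdwu] at hsub
  have hune : u ≠ 0 := sub_ne_zero.mpr h12.symm
  have hwne : w ≠ 0 := sub_ne_zero.mpr h13.symm
  have hdne : d ≠ 0 := sub_ne_zero.mpr h23.symm
  have hu0 : u.val ≠ 0 := fun hc => hune (by apply Fin.ext; rw [hc, Fin.val_zero])
  have hw0 : w.val ≠ 0 := fun hc => hwne (by apply Fin.ext; rw [hc, Fin.val_zero])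
  have hd0 : d.val ≠ 0 := fun hc => hdne (by apply Fin.ext; rw [hc, Fin.val_zero])
  have huwne : u ≠ w := by
    intro h'
    apply h23
    rw [hu, hw] at h'
    have := congrArg (· + a1) h'
    simpa using this
  have hulr := u.isLt
  have hwlt := w.isLt
  have hdlt := d.isLt
  have hall : ∀ z : Fin n, (z = 0 ∨ z = u ∨ z = w) → (a1 + z, b) ∈ X := by
    rintro z (rfl | rfl | rfl)
    · simpa using mm1
    · rw [hu, show a1 + (a2 - a1) = a2 by ring]; exact mm2
    · rw [hw, show a1 + (a3 - a1) = a3 by ring]; exact mm3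
  have hn46 : n = 4 ∨ n = 6 := by omega
  rcases hn46 with rfl | rfl
  · -- n = 4
    obtain ⟨c, hc0, hc1, hc3⟩ := hex4 u w hune hwne huwne
    refine lemB (by norm_num) hm3 hX (k := 2) (s := 1) (r := 3) rfl (by norm_num)
      (by norm_num) (by norm_num) (by norm_num) (hall c hc0) ?_ ?_
    · rw [show ((1 : ℕ) : Fin 4) = 1 from rfl, add_assoc]
      exact hall (c + 1) hc1
    · rw [show ((3 : ℕ) : Fin 4) = 3 from rfl, add_assoc]
      exact hall (c + 3) hc3
  · -- n = 6
    rw [hdwu] at c23 c32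
    obtain ⟨c, hc0, hc2, hc4⟩ := hex6 u w hune hwne huwne c12 c21 c13 c31 c23 c32
    refine lemB (by norm_num) hm3 hX (k := 3) (s := 2) (r := 4) rfl (by norm_num)
      (by norm_num) (by norm_num) (by norm_num) (hall c hc0) ?_ ?_
    · rw [show ((2 : ℕ) : Fin 6) = 2 from rfl, add_assoc]
      exact hall (c + 2) hc2
    · rw [show ((4 : ℕ) : Fin 6) = 4 from rfl, add_assoc]
      exact hall (c + 4) hc4

end Row3

private lemma fin3_adj_sub_one : ∀ c : Fin 3, (cycleGraph 3).Adj c (c - 1) := by decide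
private lemma fin3_adj_of_ne : ∀ x y : Fin 3, x ≠ y → (cycleGraph 3).Adj x y := by decide
private lemma fin3_cdist_sub_one : ∀ c : Fin 3, cdist c (c - 1) = 1 := by decide
private lemma fin3_cdist_pos : ∀ x y : Fin 3, x ≠ y → 1 ≤ cdist x y := by decide
private lemma fin3_ne_sub_one : ∀ c : Fin 3, c ≠ c - 1 := by decide

private lemma lemC {X : Set (Fin 3 × Fin 3)}
    (hX : IsOuterMVSet (cycleGraph 3 □ cycleGraph 3) X)
    {b : Fin 3} (hrow : ∀ a : Fin 3, (a, b) ∈ X) :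
    ∀ q : Fin 3 × Fin 3, q ∈ X → q.2 = b := by
  suffices hnot : ∀ c d : Fin 3, d ≠ b → (c, d) ∉ X by
    rintro ⟨c, d⟩ hq
    by_contra hdb
    exact hnot c d hdb hq
  intro c d hdb hmem
  obtain ⟨p, hpath, hlen, hsup⟩ := visible_of_outer hX (hrow c) (c - 1, d)
  -- distance is exactly 2
  have hup : (cycleGraph 3 □ cycleGraph 3).dist (c, b) (c - 1, d) ≤ 2 := by
    have e1 : (cycleGraph 3 □ cycleGraph 3).Adj (c, b) (c - 1, b) := by
      rw [boxProd_adj]; left; exact ⟨fin3_adj_sub_one c, rfl⟩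
    have e2 : (cycleGraph 3 □ cycleGraph 3).Adj (c - 1, b) (c - 1, d) := by
      rw [boxProd_adj]; right; exact ⟨fin3_adj_of_ne b d (fun h => hdb h.symm), rfl⟩
    have := dist_le (Walk.cons e1 (Walk.cons e2 Walk.nil))
    simpa using this
  have hlow := tdist_le_length p
  simp only [fin3_cdist_sub_one] at hlow
  have hlow2 : 2 ≤ p.length := by
    have := fin3_cdist_pos b d (fun h => hdb h.symm)
    omega
  have hlen2 : p.length = 2 := by omega
  clear hlow hlow2 hup hlen hpath
  -- decompose the walk
  generalize hgen : ((c - 1, d) : Fin 3 × Fin 3) = u at p hsup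
  cases p with
  | nil => simp at hlen2
  | @cons _ w _ h q =>
    cases q with
    | nil => simp at hlen2
    | @cons _ z _ h' q' =>
      cases q' with
      | nil =>
        subst hgen
        obtain ⟨w1, w2⟩ := w
        have hwmem : ((w1, w2) : Fin 3 × Fin 3) ∈
            (Walk.cons h (Walk.cons h' Walk.nil)).support := by
          rw [Walk.support_cons]
          exact List.mem_cons_of_mem _ (Walk.start_mem_support _)
        rcases (boxProd_adj).1 h with ⟨h1, h2⟩ | ⟨h1, h2⟩
        · -- first step horizontal : w2 = b
          simp only at h1 h2
          subst h2
          rcases (boxProd_adj).1 h' with ⟨h1', h2'⟩ | ⟨h1', h2'⟩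
          · simp only at h2'
            exact hdb h2'.symm
          · simp only at h1' h2'
            subst h2'
            -- w = (c - 1, b), a blocked middle vertex
            rcases hsup _ hwmem (hrow (c - 1)) with hc | hc
            · exact fin3_ne_sub_one c (congrArg Prod.fst hc).symm
            · exact hdb (congrArg Prod.snd hc).symm
        · -- first step vertical : w1 = c
          simp only at h1 h2
          subst h2
          rcases (boxProd_adj).1 h' with ⟨h1', h2'⟩ | ⟨h1', h2'⟩
          · simp only at h1' h2'
            subst h2'
            -- w = (c, d), a blocked middle vertex
            rcases hsup _ hwmem hmem with hc | hc
            · exact hdb (congrArg Prod.snd hc)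
            · exact fin3_ne_sub_one c (congrArg Prod.fst hc)
          · simp only at h1' h2'
            exact fin3_ne_sub_one c h2'
      | cons h'' q'' => simp [Walk.length_cons] at hlen2

private lemma exists_three {α : Type*} [DecidableEq α] (s : Finset α) (h : 3 ≤ s.card) :
    ∃ x ∈ s, ∃ y ∈ s, ∃ z ∈ s, x ≠ y ∧ x ≠ z ∧ y ≠ z := by
  obtain ⟨x, hx⟩ := Finset.card_pos.1 (show 0 < s.card by omega)
  have h2 : 2 ≤ (s.erase x).card := by
    rw [Finset.card_erase_of_mem hx]; omega
  obtain ⟨y, hy⟩ := Finset.card_pos.1 (show 0 < (s.erase x).card by omega)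
  have h3 : 1 ≤ ((s.erase x).erase y).card := by
    rw [Finset.card_erase_of_mem hy]; omega
  obtain ⟨z, hz⟩ := Finset.card_pos.1 (show 0 < ((s.erase x).erase y).card by omega)
  have hyx : y ≠ x := Finset.ne_of_mem_erase hy
  have hzy : z ≠ y := Finset.ne_of_mem_erase hz
  have hzx : z ≠ x := Finset.ne_of_mem_erase (Finset.mem_of_mem_erase hz)
  exact ⟨x, hx, y, Finset.mem_of_mem_erase hy, z,
    Finset.mem_of_mem_erase (Finset.mem_of_mem_erase hz), hyx.symm, hzx.symm, hzy.symm⟩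

private lemma card_sum_bound {n m : ℕ} (F : Finset (Fin n × Fin m))
    (h : ∀ bb : Fin m, (F.filter (fun p => p.2 = bb)).card ≤ 2) : F.card ≤ 2 * m := by
  calc F.card = ∑ bb ∈ (Finset.univ : Finset (Fin m)),
        (F.filter (fun p => p.2 = bb)).card :=
        Finset.card_eq_sum_card_fiberwise (fun x _ => Finset.mem_univ _)
    _ ≤ ∑ _bb ∈ (Finset.univ : Finset (Fin m)), 2 := Finset.sum_le_sum (fun i _ => h i)
    _ = m * 2 := by rw [Finset.sum_const, Finset.card_univ, Fintype.card_fin, smul_eq_mul]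
    _ = 2 * m := Nat.mul_comm m 2

private lemma fin3_cases : ∀ x : Fin 3, x = 0 ∨ x = 1 ∨ x = 2 := by decide

private lemma ncard_bound {n m : ℕ} (hm3 : 3 ≤ m) (hnm : m ≤ n) (X : Set (Fin n × Fin m))
    (hX : IsOuterMVSet (cycleGraph n □ cycleGraph m) X) : X.ncard ≤ 2 * m := by
  classical
  have hn3 : 3 ≤ n := le_trans hm3 hnm
  haveI : NeZero n := ⟨by omega⟩
  haveI : NeZero m := ⟨by omega⟩
  have hfin : X.Finite := Set.toFinite X
  rw [Set.ncard_eq_toFinset_card X hfin]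
  rcases Nat.lt_or_ge n 4 with hn | hn
  · -- n = 3 hence m = 3
    have hn3' : n = 3 := by omega
    have hm3' : m = 3 := by omega
    subst hn3' hm3'
    by_cases hfull : ∃ bb : Fin 3, 3 ≤ ((hfin.toFinset).filter (fun p => p.2 = bb)).card
    · obtain ⟨bb, hbb⟩ := hfull
      set S : Finset (Fin 3 × Fin 3) := {(0, bb), (1, bb), (2, bb)} with hS
      have hmkS : ∀ p : Fin 3 × Fin 3, p.2 = bb → p ∈ S := by
        intro p hp
        have h1 : p = (p.1, bb) := by rw [← hp]
        rw [h1, hS]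
        rcases fin3_cases p.1 with h | h | h <;> simp [h]
      have hsub : (hfin.toFinset).filter (fun p => p.2 = bb) ⊆ S := by
        intro p hp
        rw [Finset.mem_filter] at hp
        exact hmkS p hp.2
      have hScard : S.card ≤ 3 := by
        apply le_trans (Finset.card_insert_le _ _)
        apply Nat.succ_le_succ
        apply le_trans (Finset.card_insert_le _ _)
        apply Nat.succ_le_succ
        simp
      have heq : (hfin.toFinset).filter (fun p => p.2 = bb) = S :=
        Finset.eq_of_subset_of_card_le hsub (le_trans hScard hbb)
      have hfull_row : ∀ a : Fin 3, (a, bb) ∈ X := by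
        intro a
        have haS : ((a, bb) : Fin 3 × Fin 3) ∈ S := hmkS (a, bb) rfl
        rw [← heq, Finset.mem_filter, Set.Finite.mem_toFinset] at haS
        exact haS.1
      have hrowall := lemC hX hfull_row
      have hFsub : hfin.toFinset ⊆ S := by
        intro p hp
        rw [Set.Finite.mem_toFinset] at hp
        exact hmkS p (hrowall p hp)
      calc (hfin.toFinset).card ≤ S.card := Finset.card_le_card hFsub
        _ ≤ 3 := hScard
        _ ≤ 2 * 3 := by norm_num
    · push_neg at hfull
      exact card_sum_bound _ (fun bb => by have := hfull bb; omega)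
  · -- n ≥ 4 : every row has at most 2 points of X
    apply card_sum_bound
    intro bb
    by_contra hcon
    push_neg at hcon
    obtain ⟨⟨x1, y1⟩, hp1, ⟨x2, y2⟩, hp2, ⟨x3, y3⟩, hp3, h12, h13, h23⟩ :=
      exists_three _ (by omega : 3 ≤ ((hfin.toFinset).filter (fun p => p.2 = bb)).card)
    rw [Finset.mem_filter, Set.Finite.mem_toFinset] at hp1 hp2 hp3
    obtain ⟨hm1, rfl⟩ := hp1
    obtain ⟨hm2, h2'⟩ := hp2
    obtain ⟨hm3', h3'⟩ := hp3
    simp only at h2' h3'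
    subst h2' h3'
    exact row3 hn hm3 hX (fun hc => h12 (by rw [hc])) (fun hc => h13 (by rw [hc]))
      (fun hc => h23 (by rw [hc])) hm1 hm2 hm3'


theorem muOuter_torus_le (n m : ℕ) (hm : 3 ≤ m) (hnm : m ≤ n) :
    muOuter (cycleGraph n □ cycleGraph m) ≤ 2 * m := by
  unfold muOuter
  apply csSup_le'
  rintro k ⟨X, hX, rfl⟩
  exact ncard_bound hm hnm X hX
end

section
/- Let k ≥ 2 and let n_1,…,n_k be integers with n_i ≥ 3 for every i ∈ {1,…,k}. If H_k = P_{n_1} □ P_{n_2} □ ⋯ □ P_{n_k} is the Cartesian product of the paths P_{n_1},…,P_{n_k}, then μ_t(H_k) = 2^k. -/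
open SimpleGraph

/-- The Cartesian product of the paths `P_{n 0} □ P_{n 1} □ ⋯ □ P_{n (k-1)}`:
vertices are tuples, and two tuples are adjacent iff they are adjacent in one
coordinate and equal in all the others. -/
def pathsBoxProd {k : ℕ} (n : Fin k → ℕ) : SimpleGraph (∀ i, Fin (n i)) where
  Adj u v := ∃ i, (pathGraph (n i)).Adj (u i) (v i) ∧ ∀ j, j ≠ i → u j = v j
  symm := by
    constructor
    rintro u v ⟨i, hadj, heq⟩
    exact ⟨i, hadj.symm, fun j hj => (heq j hj).symm⟩
  loopless := by
    constructor
    rintro u ⟨i, hadj, -⟩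
    exact hadj.ne rfl

section Aux
variable {k : ℕ} {n : Fin k → ℕ}

private def DD (u v : ∀ i, Fin (n i)) : ℕ :=
  ∑ i, ((u i).val - (v i).val + ((v i).val - (u i).val))

private lemma sum_split (f : Fin k → ℕ) (i : Fin k) :
    ∑ j, f j = f i + ∑ j ∈ Finset.univ.erase i, f j :=
  (Finset.add_sum_erase _ f (Finset.mem_univ i)).symm

private lemma adj_iff {u v : ∀ i, Fin (n i)} :
    (pathsBoxProd n).Adj u v ↔
      ∃ i, ((u i).val + 1 = (v i).val ∨ (v i).val + 1 = (u i).val) ∧ ∀ j, j ≠ i → u j = v j := by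
  simp only [pathsBoxProd, pathGraph_adj]

private lemma DD_le_length {u v : ∀ i, Fin (n i)} (p : (pathsBoxProd n).Walk u v) :
    DD u v ≤ p.length := by
  induction p with
  | nil => simp [DD]
  | @cons u b v h q ih =>
    obtain ⟨i, hpadj, hoth⟩ := adj_iff.1 h
    have e1 : DD u v = ((u i).val - (v i).val + ((v i).val - (u i).val))
        + ∑ j ∈ Finset.univ.erase i, ((u j).val - (v j).val + ((v j).val - (u j).val)) :=
      sum_split _ i
    have e2 : DD b v = ((b i).val - (v i).val + ((v i).val - (b i).val))
        + ∑ j ∈ Finset.univ.erase i, ((b j).val - (v j).val + ((v j).val - (b j).val)) :=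
      sum_split _ i
    have e3 : ∑ j ∈ Finset.univ.erase i, ((u j).val - (v j).val + ((v j).val - (u j).val))
        = ∑ j ∈ Finset.univ.erase i, ((b j).val - (v j).val + ((v j).val - (b j).val)) := by
      refine Finset.sum_congr rfl fun j hj => ?_
      rw [hoth j (Finset.ne_of_mem_erase hj)]
    rw [Walk.length_cons]
    omega

private lemma exists_box_walk :
    ∀ (d : ℕ) (u v : ∀ i, Fin (n i)), DD u v = d →
    ∃ p : (pathsBoxProd n).Walk u v, p.length = d ∧
      ∀ w ∈ p.support, ∀ j, min (u j).val (v j).val ≤ (w j).val ∧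
        (w j).val ≤ max (u j).val (v j).val := by
  intro d
  induction d with
  | zero =>
    intro u v h
    have huv : u = v := by
      funext i
      have := (Finset.sum_eq_zero_iff).mp h i (Finset.mem_univ i)
      exact Fin.ext (by omega)
    subst huv
    refine ⟨Walk.nil, rfl, ?_⟩
    intro w hw j
    simp only [Walk.support_nil, List.mem_singleton] at hw
    subst hw
    simp
  | succ d ih =>
    intro u v h
    have hex : ∃ i, (u i).val ≠ (v i).val := by
      by_contra hc
      push_neg at hc
      have : DD u v = 0 := Finset.sum_eq_zero fun i _ => by have := hc i; omega
      omega
    obtain ⟨i, hi⟩ := hex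
    have hb : (v i).val < n i := (v i).isLt
    have ha : (u i).val < n i := (u i).isLt
    set a := (u i).val with hadef
    set b := (v i).val with hbdef
    have hsval : ∃ sval : ℕ, sval < n i ∧ (a + 1 = sval ∨ sval + 1 = a) ∧
        min a b ≤ sval ∧ sval ≤ max a b ∧
        (sval - b + (b - sval)) + 1 = (a - b + (b - a)) := by
      by_cases hab : a < b
      · exact ⟨a + 1, by omega, by omega, by omega, by omega, by omega⟩
      · exact ⟨a - 1, by omega, by omega, by omega, by omega, by omega⟩
    obtain ⟨sval, hs0, hs1, hs2, hs3, hs4⟩ := hsval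
    set s : Fin (n i) := ⟨sval, hs0⟩ with hsdef
    set u1 := Function.update u i s with hu1def
    have hkey : ∀ j, j ≠ i → u1 j = u j := fun j hj => Function.update_of_ne hj _ _
    have hu1i : (u1 i).val = sval := by rw [hu1def, Function.update_self]
    have hadj : (pathsBoxProd n).Adj u u1 := by
      refine adj_iff.2 ⟨i, ?_, fun j hj => (hkey j hj).symm⟩
      rw [hu1i]; omega
    have e1 : DD u1 v = (sval - b + (b - sval))
        + ∑ j ∈ Finset.univ.erase i, ((u j).val - (v j).val + ((v j).val - (u j).val)) := by
      rw [DD, sum_split _ i, hu1i]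
      congr 1
      refine Finset.sum_congr rfl fun j hj => ?_
      rw [hkey j (Finset.ne_of_mem_erase hj)]
    have e2 : DD u v = (a - b + (b - a))
        + ∑ j ∈ Finset.univ.erase i, ((u j).val - (v j).val + ((v j).val - (u j).val)) :=
      sum_split _ i
    have hd : DD u1 v = d := by omega
    obtain ⟨p, hlen, hsupp⟩ := ih u1 v hd
    refine ⟨Walk.cons hadj p, by simp [hlen], ?_⟩
    intro w hw j
    rw [Walk.support_cons, List.mem_cons] at hw
    rcases hw with rfl | hw
    · exact ⟨min_le_left _ _, le_max_left _ _⟩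
    · have hbd := hsupp w hw j
      by_cases hji : j = i
      · subst hji
        rw [hu1i] at hbd
        omega
      · rw [hkey j hji] at hbd
        exact hbd


private lemma exists_good_walk (hn : ∀ i, 3 ≤ n i) (u v : ∀ i, Fin (n i)) :
    ∃ p : (pathsBoxProd n).Walk u v, p.length = DD u v ∧
      ∀ w ∈ p.support, w ≠ u → w ≠ v → ∃ i, 0 < (w i).val ∧ (w i).val < n i - 1 := by
  by_cases huv : u = v
  · subst huv
    refine ⟨Walk.nil, ?_, ?_⟩
    · exact (Finset.sum_eq_zero fun i _ => by omega).symm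
    · intro w hw hwu hwv
      simp only [Walk.support_nil, List.mem_singleton] at hw
      exact absurd hw hwu
  by_cases hcase : ∃ i, (u i).val ≠ (v i).val ∧ 0 < (u i).val ∧ (u i).val < n i - 1
  · -- case (b): do coordinate i last, keep it at the interior value (u i)
    obtain ⟨i, hne, h1, h2⟩ := hcase
    set v' := Function.update v i (u i) with hv'def
    have hkey : ∀ j, j ≠ i → v' j = v j := fun j hj => Function.update_of_ne hj _ _
    have hv'i : (v' i).val = (u i).val := by rw [hv'def, Function.update_self]
    have e1 : DD u v' = 0
        + ∑ j ∈ Finset.univ.erase i, ((u j).val - (v j).val + ((v j).val - (u j).val)) := by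
      rw [DD, sum_split _ i, hv'i]
      congr 1
      · omega
      refine Finset.sum_congr rfl fun j hj => ?_
      rw [hkey j (Finset.ne_of_mem_erase hj)]
    have e2 : DD v' v = ((u i).val - (v i).val + ((v i).val - (u i).val)) + 0 := by
      rw [DD, sum_split _ i, hv'i]
      congr 1
      refine Finset.sum_eq_zero fun j hj => ?_
      rw [hkey j (Finset.ne_of_mem_erase hj)]
      omega
    have e3 : DD u v = ((u i).val - (v i).val + ((v i).val - (u i).val))
        + ∑ j ∈ Finset.univ.erase i, ((u j).val - (v j).val + ((v j).val - (u j).val)) :=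
      sum_split _ i
    obtain ⟨p1, l1, s1⟩ := exists_box_walk (DD u v') u v' rfl
    obtain ⟨p2, l2, s2⟩ := exists_box_walk (DD v' v) v' v rfl
    refine ⟨p1.append p2, by rw [Walk.length_append, l1, l2]; omega, ?_⟩
    intro w hw hwu hwv
    rw [Walk.mem_support_append_iff] at hw
    rcases hw with hw1 | hw2
    · refine ⟨i, ?_⟩
      have hbd := s1 w hw1 i
      rw [hv'i] at hbd
      omega
    · refine ⟨i, ?_⟩
      have hbd := s2 w hw2 i
      rw [hv'i] at hbd
      have hwnv : (w i).val ≠ (v i).val := by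
        intro hh
        apply hwv
        funext j
        by_cases hji : j = i
        · subst hji; exact Fin.ext hh
        · have hbj := s2 w hw2 j
          rw [hkey j hji] at hbj
          exact Fin.ext (by omega)
      have := (v i).isLt
      omega
  · -- case (c): all differing coordinates have extreme u-value
    push_neg at hcase
    have hne0 : ∃ i, (u i).val ≠ (v i).val := by
      by_contra hc
      push_neg at hc
      exact huv (funext fun i => Fin.ext (hc i))
    obtain ⟨i, hne⟩ := hne0
    have hua := hcase i hne
    have h3 := hn i
    have ha := (u i).isLt
    have hb := (v i).isLt
    have hsval : ∃ sval : ℕ, 0 < sval ∧ sval < n i - 1 ∧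
        min (u i).val (v i).val ≤ sval ∧ sval ≤ max (u i).val (v i).val ∧
        ((u i).val - sval + (sval - (u i).val)) + ((sval - (v i).val) + ((v i).val - sval))
          = ((u i).val - (v i).val) + ((v i).val - (u i).val) ∧
        (sval - (v i).val) + ((v i).val - sval) ≤ 1 := by
      by_cases hc1 : 0 < (v i).val ∧ (v i).val < n i - 1
      · exact ⟨(v i).val, by omega, by omega, by omega, by omega, by omega, by omega⟩
      · by_cases hv0 : (v i).val = 0
        · exact ⟨1, by omega, by omega, by omega, by omega, by omega, by omega⟩
        · exact ⟨n i - 2, by omega, by omega, by omega, by omega, by omega, by omega⟩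
    obtain ⟨sval, hsv1, hsv2, hsv3, hsv4, hsv5, hsv6⟩ := hsval
    set s : Fin (n i) := ⟨sval, by omega⟩ with hsdef
    set u' := Function.update u i s with hu'def
    set v'' := Function.update v i s with hv''def
    have hkeyu : ∀ j, j ≠ i → u' j = u j := fun j hj => Function.update_of_ne hj _ _
    have hkeyv : ∀ j, j ≠ i → v'' j = v j := fun j hj => Function.update_of_ne hj _ _
    have hu'i : (u' i).val = sval := by rw [hu'def, Function.update_self]
    have hv''i : (v'' i).val = sval := by rw [hv''def, Function.update_self]
    have e1 : DD u u' = ((u i).val - sval + (sval - (u i).val)) + 0 := by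
      rw [DD, sum_split _ i, hu'i]
      congr 1
      refine Finset.sum_eq_zero fun j hj => ?_
      rw [hkeyu j (Finset.ne_of_mem_erase hj)]
      omega
    have e2 : DD u' v'' = 0
        + ∑ j ∈ Finset.univ.erase i, ((u j).val - (v j).val + ((v j).val - (u j).val)) := by
      rw [DD, sum_split _ i, hu'i, hv''i]
      congr 1
      · omega
      refine Finset.sum_congr rfl fun j hj => ?_
      rw [hkeyu j (Finset.ne_of_mem_erase hj), hkeyv j (Finset.ne_of_mem_erase hj)]
    have e3 : DD v'' v = ((sval - (v i).val) + ((v i).val - sval)) + 0 := by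
      rw [DD, sum_split _ i, hv''i]
      congr 1
      refine Finset.sum_eq_zero fun j hj => ?_
      rw [hkeyv j (Finset.ne_of_mem_erase hj)]
      omega
    have e4 : DD u v = ((u i).val - (v i).val + ((v i).val - (u i).val))
        + ∑ j ∈ Finset.univ.erase i, ((u j).val - (v j).val + ((v j).val - (u j).val)) :=
      sum_split _ i
    obtain ⟨p1, l1, s1⟩ := exists_box_walk (DD u u') u u' rfl
    obtain ⟨p2, l2, s2⟩ := exists_box_walk (DD u' v'') u' v'' rfl
    obtain ⟨p3, l3, s3⟩ := exists_box_walk (DD v'' v) v'' v rfl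
    refine ⟨p1.append (p2.append p3), ?_, ?_⟩
    · rw [Walk.length_append, Walk.length_append, l1, l2, l3]; omega
    intro w hw hwu hwv
    rw [Walk.mem_support_append_iff, Walk.mem_support_append_iff] at hw
    refine ⟨i, ?_⟩
    rcases hw with hw1 | hw2 | hw3
    · have hbd := s1 w hw1 i
      rw [hu'i] at hbd
      have hwnu : (w i).val ≠ (u i).val := by
        intro hh
        apply hwu
        funext j
        by_cases hji : j = i
        · subst hji; exact Fin.ext hh
        · have hbj := s1 w hw1 j
          rw [hkeyu j hji] at hbj
          exact Fin.ext (by omega)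
      omega
    · have hbd := s2 w hw2 i
      rw [hu'i, hv''i] at hbd
      omega
    · have hbd := s3 w hw3 i
      rw [hv''i] at hbd
      have hwnv : (w i).val ≠ (v i).val := by
        intro hh
        apply hwv
        funext j
        by_cases hji : j = i
        · subst hji; exact Fin.ext hh
        · have hbj := s3 w hw3 j
          rw [hkeyv j hji] at hbj
          exact Fin.ext (by omega)
      omega

private lemma dist_eq_DD (u v : ∀ i, Fin (n i)) : (pathsBoxProd n).dist u v = DD u v := by
  obtain ⟨p, hp, -⟩ := exists_box_walk (DD u v) u v rfl
  refine le_antisymm (hp ▸ SimpleGraph.dist_le p) ?_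
  obtain ⟨q, hq⟩ := p.reachable.exists_walk_length_eq_dist
  rw [← hq]
  exact DD_le_length q


private def corners (n : Fin k → ℕ) : Set (∀ i, Fin (n i)) :=
  {x | ∀ i, (x i).val = 0 ∨ (x i).val = n i - 1}

private lemma corners_tmv (hn : ∀ i, 3 ≤ n i) :
    IsTotalMVSet (pathsBoxProd n) (corners n) := by
  intro u v
  obtain ⟨p, hlen, hgood⟩ := exists_good_walk hn u v
  refine ⟨p.bypass, p.bypass_isPath, ?_, ?_⟩
  · have h1 : (pathsBoxProd n).dist u v ≤ p.bypass.length := SimpleGraph.dist_le _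
    have h2 : p.bypass.length ≤ p.length := Walk.length_bypass_le p
    rw [dist_eq_DD] at h1 ⊢
    omega
  · intro w hw hwX
    by_contra hc
    push_neg at hc
    obtain ⟨i, hi1, hi2⟩ := hgood w (Walk.support_bypass_subset p hw) hc.1 hc.2
    rcases hwX i with h | h <;> omega

private lemma tmv_subset_corners (hn : ∀ i, 3 ≤ n i) (X : Set (∀ i, Fin (n i)))
    (hX : IsTotalMVSet (pathsBoxProd n) X) : X ⊆ corners n := by
  intro x hx
  by_contra hc
  simp only [corners, Set.mem_setOf_eq] at hc
  push_neg at hc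
  obtain ⟨i, hi0, hi1⟩ := hc
  have h3 := hn i
  have hxn := (x i).isLt
  have hlo : 0 < (x i).val := by omega
  have hhi : (x i).val < n i - 1 := by omega
  set u := Function.update x i ⟨(x i).val - 1, by omega⟩ with hudef
  set v := Function.update x i ⟨(x i).val + 1, by omega⟩ with hvdef
  have hui : (u i).val = (x i).val - 1 := by rw [hudef, Function.update_self]
  have hvi : (v i).val = (x i).val + 1 := by rw [hvdef, Function.update_self]
  have hukey : ∀ j, j ≠ i → u j = x j := fun j hj => Function.update_of_ne hj _ _
  have hvkey : ∀ j, j ≠ i → v j = x j := fun j hj => Function.update_of_ne hj _ _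
  have hD : DD u v = 2 := by
    rw [DD, sum_split _ i, hui, hvi]
    have : ∑ j ∈ Finset.univ.erase i, ((u j).val - (v j).val + ((v j).val - (u j).val)) = 0 := by
      refine Finset.sum_eq_zero fun j hj => ?_
      rw [hukey j (Finset.ne_of_mem_erase hj), hvkey j (Finset.ne_of_mem_erase hj)]
      omega
    omega
  obtain ⟨p, hpath, hplen, hpvis⟩ := hX u v
  rw [dist_eq_DD, hD] at hplen
  -- the middle vertex of p is x
  have h0lt : 0 < p.length := by omega
  have h1lt : 1 < p.length := by omega
  have hadj1 : (pathsBoxProd n).Adj u (p.getVert 1) := by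
    have := p.adj_getVert_succ h0lt
    rwa [p.getVert_zero] at this
  have hadj2 : (pathsBoxProd n).Adj (p.getVert 1) v := by
    have := p.adj_getVert_succ h1lt
    rwa [show 1 + 1 = p.length by omega, p.getVert_length] at this
  set w := p.getVert 1 with hwdef
  obtain ⟨j1, hj1adj, hj1eq⟩ := adj_iff.1 hadj1
  obtain ⟨j2, hj2adj, hj2eq⟩ := adj_iff.1 hadj2
  have hj1i : j1 = i := by
    by_contra hj
    have hwi : (w i).val = (u i).val := (congrArg Fin.val (hj1eq i (fun hh => hj hh.symm))).symm
    by_cases hj2i : j2 = i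
    · subst hj2i
      omega
    · have hwi2 : (w i).val = (v i).val := congrArg Fin.val (hj2eq i (fun hh => hj2i hh.symm))
      omega
  rw [hj1i] at hj1adj hj1eq
  have hj2i : j2 = i := by
    by_contra hj
    have hwi2 : (w i).val = (v i).val := congrArg Fin.val (hj2eq i (fun hh => hj hh.symm))
    omega
  rw [hj2i] at hj2adj hj2eq
  have hwx : w = x := by
    funext m
    by_cases hm : m = i
    · subst hm
      exact Fin.ext (by omega)
    · have h1 : u m = w m := hj1eq m hm
      have h2 : u m = x m := hukey m hm
      rw [← h1, h2]
  have hwmem : w ∈ p.support := by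
    rw [Walk.mem_support_iff_exists_getVert]
    exact ⟨1, rfl, by omega⟩
  have hwxval : (w i).val = (x i).val := congrArg Fin.val (congrFun hwx i)
  rcases hpvis w hwmem (hwx ▸ hx) with hh | hh
  · have hq : (w i).val = (u i).val := congrArg Fin.val (congrFun hh i)
    omega
  · have hq : (w i).val = (v i).val := congrArg Fin.val (congrFun hh i)
    omega

private lemma corners_ncard (hn : ∀ i, 3 ≤ n i) : (corners n).ncard = 2 ^ k := by
  classical
  set f : (Fin k → Bool) → (∀ i, Fin (n i)) := fun b i =>
    if b i then ⟨n i - 1, by have := hn i; omega⟩ else ⟨0, by have := hn i; omega⟩ with hfdef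
  have hfval : ∀ b i, (f b i).val = if b i then n i - 1 else 0 := by
    intro b i
    rw [hfdef]
    by_cases hb : b i <;> simp [hb]
  have hinj : Function.Injective f := by
    intro b1 b2 h
    funext i
    have h3 := hn i
    have hval : (f b1 i).val = (f b2 i).val := congrArg Fin.val (congrFun h i)
    rw [hfval, hfval] at hval
    cases hb1 : b1 i <;> cases hb2 : b2 i <;> rw [hb1, hb2] at hval <;> simp at hval <;>
      first | rfl | exact absurd hval (by omega) | exact absurd hval.symm (by omega)
  have himg : f '' Set.univ = corners n := by
    ext x
    constructor
    · rintro ⟨b, -, rfl⟩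
      intro i
      rw [hfval]
      by_cases h1 : b i <;> simp [h1]
    · intro hx
      refine ⟨fun i => decide ((x i).val ≠ 0), Set.mem_univ _, ?_⟩
      funext i
      have h3 := hn i
      have hv := hfval (fun j => decide ((x j).val ≠ 0)) i
      refine Fin.ext (hv.trans ?_)
      rcases hx i with h | h
      · simp [h]
      · have hne : (x i).val ≠ 0 := by omega
        simp [hne, h]
        omega
  rw [← himg, Set.ncard_image_of_injective _ hinj, Set.ncard_univ]
  simp [Nat.card_eq_fintype_card]

end Aux

theorem muTotal_paths_boxProd (k : ℕ) (hk : 2 ≤ k) (n : Fin k → ℕ)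
    (hn : ∀ i, 3 ≤ n i) :
    muTotal (pathsBoxProd n) = 2 ^ k := by
  have hmem : 2 ^ k ∈ {m | ∃ X : Set (∀ i, Fin (n i)),
      IsTotalMVSet (pathsBoxProd n) X ∧ X.ncard = m} :=
    ⟨corners n, corners_tmv hn, corners_ncard hn⟩
  have hbdd : ∀ m ∈ {m | ∃ X : Set (∀ i, Fin (n i)),
      IsTotalMVSet (pathsBoxProd n) X ∧ X.ncard = m}, m ≤ 2 ^ k := by
    rintro m ⟨X, hX, rfl⟩
    calc X.ncard ≤ (corners n).ncard :=
          Set.ncard_le_ncard (tmv_subset_corners hn X hX) (Set.toFinite _)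
      _ = 2 ^ k := corners_ncard hn
  rw [muTotal]
  exact le_antisymm (csSup_le ⟨2 ^ k, hmem⟩ hbdd) (le_csSup ⟨2 ^ k, hbdd⟩ hmem)
end

section
/- For the path graph P_n with vertex set {1,…,n} and n ≥ 4, the dual mutual-visibility sets of maximum cardinality are exactly the three sets {1,2}, {1,n}, and {n−1,n}; in particular μ_d(P_n) = 2. -/
open SimpleGraph

namespace PGaux

variable {n : ℕ}

lemma walk_length_lower {u v : Fin n} (p : (pathGraph n).Walk u v) :
    ((v.val : ℤ) - u.val ≤ p.length) ∧ ((u.val : ℤ) - v.val ≤ p.length) := by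
  induction p with
  | nil => simp
  | @cons a x c hadj q ih =>
      rw [pathGraph_adj] at hadj
      simp only [Walk.length_cons]
      push_cast
      omega

lemma walk_ivt {u v : Fin n} (p : (pathGraph n).Walk u v) (k : ℕ)
    (h1 : (u.val ≤ k ∧ k ≤ v.val) ∨ (v.val ≤ k ∧ k ≤ u.val)) :
    ∃ w ∈ p.support, w.val = k := by
  induction p with
  | nil =>
      rename_i z
      refine ⟨z, by simp, ?_⟩
      omega
  | @cons a x c hadj q ih =>
      rw [pathGraph_adj] at hadj
      by_cases hk : (x.val ≤ k ∧ k ≤ c.val) ∨ (c.val ≤ k ∧ k ≤ x.val)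
      · obtain ⟨w, hw, hwk⟩ := ih hk
        exact ⟨w, by simp [hw], hwk⟩
      · refine ⟨a, by simp, ?_⟩
        clear ih
        omega

def upWalk : (d : ℕ) → (a b : Fin n) → a.val + d = b.val → (pathGraph n).Walk a b
  | 0, a, b, h => (Walk.nil : (pathGraph n).Walk a a).copy rfl (Fin.ext (by omega))
  | d+1, a, b, h =>
      Walk.cons (show (pathGraph n).Adj a ⟨a.val+1, by omega⟩ by
          rw [pathGraph_adj]; left; rfl)
        (upWalk d ⟨a.val+1, by omega⟩ b (by simp; omega))

lemma upWalk_length : ∀ (d : ℕ) (a b : Fin n) (h : a.val + d = b.val),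
    (upWalk d a b h).length = d
  | 0, a, b, h => by simp [upWalk]
  | d+1, a, b, h => by
      simp [upWalk, upWalk_length d]

lemma upWalk_support : ∀ (d : ℕ) (a b : Fin n) (h : a.val + d = b.val),
    ∀ w ∈ (upWalk d a b h).support, a.val ≤ w.val ∧ w.val ≤ b.val
  | 0, a, b, h => by
      intro w hw
      simp [upWalk] at hw
      omega
  | d+1, a, b, h => by
      intro w hw
      simp [upWalk] at hw
      rcases hw with rfl | hw
      · omega
      · have := upWalk_support d ⟨a.val+1, by omega⟩ b (by simp; omega) w hw
        simp at this
        omega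

lemma upWalk_isPath : ∀ (d : ℕ) (a b : Fin n) (h : a.val + d = b.val),
    (upWalk d a b h).IsPath
  | 0, a, b, h => by simp [upWalk]
  | d+1, a, b, h => by
      rw [upWalk, Walk.cons_isPath_iff]
      refine ⟨upWalk_isPath d _ _ _, fun hmem => ?_⟩
      have := upWalk_support d ⟨a.val+1, by omega⟩ b (by simp; omega) a hmem
      simp at this

lemma dist_eq (u v : Fin n) :
    (pathGraph n).dist u v = max u.val v.val - min u.val v.val := by
  have key : ∀ a b : Fin n, a.val ≤ b.val → (pathGraph n).dist a b = b.val - a.val := by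
    intro a b hab
    have hle := SimpleGraph.dist_le (upWalk (b.val - a.val) a b (by omega))
    rw [upWalk_length] at hle
    have hreach : (pathGraph n).Reachable a b := ⟨upWalk (b.val - a.val) a b (by omega)⟩
    obtain ⟨p, hp⟩ := hreach.exists_walk_length_eq_dist
    have := (walk_length_lower p).1
    omega
  rcases le_total u.val v.val with h | h
  · rw [key u v h]; omega
  · rw [SimpleGraph.dist_comm, key v u h]; omega

lemma xvisible_iff (X : Set (Fin n)) (u v : Fin n) :
    XVisible (pathGraph n) X u v ↔
      ∀ w : Fin n, min u.val v.val < w.val → w.val < max u.val v.val → w ∉ X := by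
  constructor
  · rintro ⟨p, hp, hlen, hcond⟩ w h1 h2 hwX
    obtain ⟨w', hw', hw'k⟩ := walk_ivt p w.val (by omega)
    have hww : w' = w := Fin.ext hw'k
    subst hww
    rcases hcond w' hw' hwX with rfl | rfl <;> omega
  · intro h
    have key : ∀ a b : Fin n, a.val ≤ b.val →
        (∀ w : Fin n, min a.val b.val < w.val → w.val < max a.val b.val → w ∉ X) →
        XVisible (pathGraph n) X a b := by
      intro a b hab hcond
      refine ⟨upWalk (b.val - a.val) a b (by omega), upWalk_isPath _ _ _ _, ?_, ?_⟩
      · rw [upWalk_length, dist_eq]; omega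
      · intro w hw hwX
        have hb := upWalk_support _ _ _ _ w hw
        rcases Nat.eq_or_lt_of_le hb.1 with heq | hlt
        · exact Or.inl (Fin.ext heq.symm)
        rcases Nat.eq_or_lt_of_le hb.2 with heq | hlt2
        · exact Or.inr (Fin.ext heq)
        exact absurd hwX (hcond w (by omega) (by omega))
    rcases le_total u.val v.val with hle | hle
    · exact key u v hle h
    · obtain ⟨p, hp, hlen, hcond⟩ := key v u hle (by intro w h1 h2; exact h w (by omega) (by omega))
      refine ⟨p.reverse, hp.reverse, ?_, ?_⟩
      · rw [Walk.length_reverse, hlen, SimpleGraph.dist_comm]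
      · intro w hw hwX
        rw [Walk.support_reverse, List.mem_reverse] at hw
        exact (hcond w hw hwX).symm

end PGaux


open PGaux in
theorem muDual_pathGraph_and_muDual_sets (n : ℕ) (hn : 4 ≤ n) :
    muDual (pathGraph n) = 2 ∧
      ∀ X : Set (Fin n),
        (IsDualMVSet (pathGraph n) X ∧ X.ncard = muDual (pathGraph n)) ↔
          (X = {⟨0, by omega⟩, ⟨1, by omega⟩} ∨
           X = {⟨0, by omega⟩, ⟨n - 1, by omega⟩} ∨
           X = {⟨n - 2, by omega⟩, ⟨n - 1, by omega⟩}) := by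
  -- the middle-separation consequence of the dual condition
  have hsep : ∀ X : Set (Fin n), IsDualMVSet (pathGraph n) X → ∀ x ∈ X,
      ∀ u v : Fin n, u ∉ X → v ∉ X → u.val < x.val → x.val < v.val → False := by
    intro X hD x hx u v hu hv h1 h2
    have := (xvisible_iff X u v).mp (hD.2 u hu v hv) x (by omega) (by omega)
    exact this hx
  -- any dual MV set has at most 2 elements
  have hcard2 : ∀ X : Set (Fin n), IsDualMVSet (pathGraph n) X → X.ncard ≤ 2 := by
    intro X hD
    by_contra hlt
    push_neg at hlt
    obtain ⟨a, b, c, ha, hb, hc, hab, hac, hbc⟩ :=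
      (Set.two_lt_ncard_iff (Set.toFinite X)).mp hlt
    have hab' : a.val ≠ b.val := fun h => hab (Fin.ext h)
    have hac' : a.val ≠ c.val := fun h => hac (Fin.ext h)
    have hbc' : b.val ≠ c.val := fun h => hbc (Fin.ext h)
    obtain ⟨x, y, z, hx, hy, hz, h1, h2⟩ :
        ∃ x y z : Fin n, x ∈ X ∧ y ∈ X ∧ z ∈ X ∧ x.val < y.val ∧ y.val < z.val := by
      rcases Nat.lt_or_ge a.val b.val with h1 | h1
      · rcases Nat.lt_or_ge b.val c.val with h2 | h2
        · exact ⟨a, b, c, ha, hb, hc, h1, h2⟩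
        · rcases Nat.lt_or_ge a.val c.val with h3 | h3
          · exact ⟨a, c, b, ha, hc, hb, h3, by omega⟩
          · exact ⟨c, a, b, hc, ha, hb, by omega, h1⟩
      · rcases Nat.lt_or_ge a.val c.val with h2 | h2
        · exact ⟨b, a, c, hb, ha, hc, by omega, h2⟩
        · rcases Nat.lt_or_ge b.val c.val with h3 | h3
          · exact ⟨b, c, a, hb, hc, ha, h3, by omega⟩
          · exact ⟨c, b, a, hc, hb, ha, by omega, by omega⟩
    exact (xvisible_iff X x z).mp (hD.1 x hx z hz) y (by omega) (by omega) hy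
  -- the three candidate sets
  have hdual : ∀ X : Set (Fin n),
      (X = {⟨0, by omega⟩, ⟨1, by omega⟩} ∨
       X = {⟨0, by omega⟩, ⟨n - 1, by omega⟩} ∨
       X = {⟨n - 2, by omega⟩, ⟨n - 1, by omega⟩}) →
      IsDualMVSet (pathGraph n) X := by
    intro X hXcases
    have key : ∀ u v : Fin n,
        ((u ∈ X ∧ v ∈ X) ∨ (u ∉ X ∧ v ∉ X)) → XVisible (pathGraph n) X u v := by
      intro u v huv
      rw [xvisible_iff]
      intro w hw1 hw2 hwX
      have hwlt := w.isLt
      have hult := u.isLt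
      have hvlt := v.isLt
      rcases hXcases with rfl | rfl | rfl <;>
        simp only [Set.mem_insert_iff, Set.mem_singleton_iff, Fin.ext_iff, Fin.val_mk,
          not_or] at huv hwX <;> omega
    exact ⟨fun u hu v hv => key u v (Or.inl ⟨hu, hv⟩),
           fun u hu v hv => key u v (Or.inr ⟨hu, hv⟩)⟩
  have hne01 : (⟨0, by omega⟩ : Fin n) ≠ ⟨1, by omega⟩ := by
    simp [Fin.ext_iff]
  have hX1card : ({⟨0, by omega⟩, ⟨1, by omega⟩} : Set (Fin n)).ncard = 2 :=
    Set.ncard_pair hne01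
  -- μ_d = 2
  have hmu : muDual (pathGraph n) = 2 := by
    have h2mem : 2 ∈ {k | ∃ X : Set (Fin n), IsDualMVSet (pathGraph n) X ∧ X.ncard = k} :=
      ⟨_, hdual _ (Or.inl rfl), hX1card⟩
    have hub : ∀ k ∈ {k | ∃ X : Set (Fin n), IsDualMVSet (pathGraph n) X ∧ X.ncard = k},
        k ≤ 2 := by
      rintro k ⟨X, hX, rfl⟩
      exact hcard2 X hX
    exact le_antisymm (csSup_le ⟨2, h2mem⟩ hub) (le_csSup ⟨2, hub⟩ h2mem)
  refine ⟨hmu, fun X => ⟨?_, ?_⟩⟩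
  · rintro ⟨hD, hXcard⟩
    rw [hmu] at hXcard
    obtain ⟨a, b, hab, rfl⟩ := Set.ncard_eq_two.mp hXcard
    have hab' : a.val ≠ b.val := fun h => hab (Fin.ext h)
    have main : ∀ a b : Fin n, a.val < b.val → IsDualMVSet (pathGraph n) {a, b} →
        (({a, b} : Set (Fin n)) = {⟨0, by omega⟩, ⟨1, by omega⟩} ∨
         ({a, b} : Set (Fin n)) = {⟨0, by omega⟩, ⟨n - 1, by omega⟩} ∨
         ({a, b} : Set (Fin n)) = {⟨n - 2, by omega⟩, ⟨n - 1, by omega⟩}) := by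
      intro a b hlt hD
      have ha : a ∈ ({a, b} : Set (Fin n)) := by simp
      have hbmem : b ∈ ({a, b} : Set (Fin n)) := by simp
      have halt := a.isLt
      have hblt := b.isLt
      by_cases ha0 : a.val = 0
      · have hb1n : b.val = 1 ∨ b.val = n - 1 := by
          by_contra hcon
          push_neg at hcon
          have hu : (⟨1, by omega⟩ : Fin n) ∉ ({a, b} : Set (Fin n)) := by
            intro hmem
            simp only [Set.mem_insert_iff, Set.mem_singleton_iff, Fin.ext_iff,
              Fin.val_mk] at hmem
            omega
          have hv : (⟨b.val + 1, by omega⟩ : Fin n) ∉ ({a, b} : Set (Fin n)) := by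
            intro hmem
            simp only [Set.mem_insert_iff, Set.mem_singleton_iff, Fin.ext_iff,
              Fin.val_mk] at hmem
            omega
          exact hsep _ hD b hbmem _ _ hu hv (by show 1 < b.val; omega)
            (by show b.val < b.val + 1; omega)
        rcases hb1n with hb1 | hbn
        · left
          rw [show a = (⟨0, by omega⟩ : Fin n) from Fin.ext ha0,
            show b = (⟨1, by omega⟩ : Fin n) from Fin.ext hb1]
        · right; left
          rw [show a = (⟨0, by omega⟩ : Fin n) from Fin.ext ha0,
            show b = (⟨n - 1, by omega⟩ : Fin n) from Fin.ext hbn]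
      · have hu : (⟨0, by omega⟩ : Fin n) ∉ ({a, b} : Set (Fin n)) := by
          intro hmem
          simp only [Set.mem_insert_iff, Set.mem_singleton_iff, Fin.ext_iff,
            Fin.val_mk] at hmem
          omega
        have hba : b.val = a.val + 1 := by
          by_contra hcon
          have hv : (⟨a.val + 1, by omega⟩ : Fin n) ∉ ({a, b} : Set (Fin n)) := by
            intro hmem
            simp only [Set.mem_insert_iff, Set.mem_singleton_iff, Fin.ext_iff,
              Fin.val_mk] at hmem
            omega
          exact hsep _ hD a ha _ _ hu hv (by show 0 < a.val; omega)
            (by show a.val < a.val + 1; omega)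
        have hbn : b.val = n - 1 := by
          by_contra hcon
          have hv : (⟨b.val + 1, by omega⟩ : Fin n) ∉ ({a, b} : Set (Fin n)) := by
            intro hmem
            simp only [Set.mem_insert_iff, Set.mem_singleton_iff, Fin.ext_iff,
              Fin.val_mk] at hmem
            omega
          exact hsep _ hD a ha _ _ hu hv (by show 0 < a.val; omega)
            (by show a.val < b.val + 1; omega)
        right; right
        rw [show a = (⟨n - 2, by omega⟩ : Fin n) from Fin.ext (show a.val = n - 2 by omega),
          show b = (⟨n - 1, by omega⟩ : Fin n) from Fin.ext hbn]
    rcases Nat.lt_or_ge a.val b.val with h | h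
    · exact main a b h hD
    · have h' : b.val < a.val := by omega
      rw [Set.pair_comm]
      exact main b a h' (Set.pair_comm a b ▸ hD)
  · intro hXcases
    refine ⟨hdual X hXcases, ?_⟩
    rw [hmu]
    rcases hXcases with rfl | rfl | rfl
    · exact hX1card
    · exact Set.ncard_pair (by simp [Fin.ext_iff]; omega)
    · exact Set.ncard_pair (by simp [Fin.ext_iff]; omega)
end
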